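/- arXiv:2601.21811 — 8 statements merged into one kernel-verified Lean document; each statement's English description precedes it below -/
import Mathlib

section
/- Let X be an atomic Archimedean vector lattice with a maximal family 𝒜 of pairwise disjoint atoms, and for each atom a let φ_a denote the coordinate functional (coming from the band decomposition X = ℝa ⊕ {a}^d). A vector x ∈ X is positive if and only if φ_a(x) ≥ 0 for every a ∈ 𝒜. -/
/-- `a` is an atom of the vector lattice `X`. -/
def VLAtom {X : Type*} [AddCommGroup X] [Lattice X] (a : X) : Prop :=
  0 < a ∧ ∀ x y : X, 0 ≤ x → x ≤ a → 0 ≤ y → y ≤ a → x ⊓ y = 0 → x = 0 ∨ y = 0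


section Aux
variable {X : Type*} [AddCommGroup X] [Lattice X]
    [CovariantClass X X (· + ·) (· ≤ ·)] [Module ℝ X]

theorem aux_smul_mono (hsmul : ∀ (c : ℝ) (x : X), 0 ≤ c → 0 ≤ x → 0 ≤ c • x)
    {s t : ℝ} {a : X} (h : s ≤ t) (ha : 0 ≤ a) : s • a ≤ t • a := by
  have := hsmul (t - s) a (by linarith) ha
  rw [sub_smul, sub_nonneg] at this
  exact this

omit [Module ℝ X] in
/-- Riesz: for nonneg elements, disjointness is additive. -/
theorem aux_add_inf {a b c : X} (ha : 0 ≤ a) (hb : 0 ≤ b) (hc : 0 ≤ c)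
    (h1 : a ⊓ c = 0) (h2 : b ⊓ c = 0) : (a + b) ⊓ c = 0 := by
  have e1 : (a + b) ⊓ c ≤ (a ⊓ c) + b := by
    rw [inf_add a c b]
    exact inf_le_inf_left _ (le_add_of_nonneg_right hb)
  have e2 : (a + b) ⊓ c ≤ (a ⊓ c) + c :=
    inf_le_right.trans (le_add_of_nonneg_left (le_inf ha hc))
  have e3 : (a + b) ⊓ c ≤ (a ⊓ c) + (b ⊓ c) := by
    calc (a + b) ⊓ c ≤ ((a ⊓ c) + b) ⊓ ((a ⊓ c) + c) := le_inf e1 e2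
    _ = (a ⊓ c) + (b ⊓ c) := (add_inf b c (a ⊓ c)).symm
  rw [h1, h2, add_zero] at e3
  exact le_antisymm e3 (le_inf (add_nonneg ha hb) hc)

/-- Scaling preserves disjointness of nonneg elements. -/
theorem aux_smul_inf (hsmul : ∀ (c : ℝ) (x : X), 0 ≤ c → 0 ≤ x → 0 ≤ c • x)
    {a b : X} (ha : 0 ≤ a) (hb : 0 ≤ b) (hab : a ⊓ b = 0)
    {c : ℝ} (hc : 0 ≤ c) : (c • a) ⊓ b = 0 := by
  obtain ⟨n, hn⟩ := exists_nat_ge c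
  have hnat : ∀ n : ℕ, ((n : ℝ) • a) ⊓ b = 0 := by
    intro n
    induction n with
    | zero => simpa using inf_eq_right.2 hb
    | succ k ih =>
      have h' : ((k : ℝ) • a + a) ⊓ b = 0 :=
        aux_add_inf (hsmul _ _ (by positivity) ha) ha hb ih hab
      have : ((k : ℝ) + 1) • a = (k : ℝ) • a + a := by rw [add_smul, one_smul]
      rw [Nat.cast_succ, this, h']
  have h1 : (c • a) ⊓ b ≤ ((n : ℝ) • a) ⊓ b :=
    inf_le_inf_right b (aux_smul_mono hsmul hn ha)
  rw [hnat n] at h1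
  exact le_antisymm h1 (le_inf (hsmul c a hc ha) hb)
end Aux

section Aux2
variable {X : Type*} [AddCommGroup X] [Lattice X]
    [CovariantClass X X (· + ·) (· ≤ ·)] [Module ℝ X]

omit [Module ℝ X] in
theorem aux_sum_nonneg {ι : Type*} (s : Finset ι) (g : ι → X)
    (hg : ∀ i ∈ s, 0 ≤ g i) : 0 ≤ ∑ i ∈ s, g i := by
  induction s using Finset.cons_induction with
  | empty => simp
  | cons i s his ih =>
    rw [Finset.sum_cons]
    exact add_nonneg (hg i (Finset.mem_cons_self i s))
      (ih fun j hj => hg j (Finset.mem_cons_of_mem hj))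

omit [Module ℝ X] in
theorem aux_sum_inf {ι : Type*} (s : Finset ι) (g : ι → X) (w : X) (hw : 0 ≤ w)
    (hg : ∀ i ∈ s, 0 ≤ g i) (hgw : ∀ i ∈ s, g i ⊓ w = 0) :
    (∑ i ∈ s, g i) ⊓ w = 0 := by
  induction s using Finset.cons_induction with
  | empty => rw [Finset.sum_empty]; exact inf_eq_left.2 hw
  | cons i s his ih =>
    rw [Finset.sum_cons]
    exact aux_add_inf (hg i (Finset.mem_cons_self i s))
      (aux_sum_nonneg s g fun j hj => hg j (Finset.mem_cons_of_mem hj)) hw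
      (hgw i (Finset.mem_cons_self i s))
      (ih (fun j hj => hg j (Finset.mem_cons_of_mem hj))
          (fun j hj => hgw j (Finset.mem_cons_of_mem hj)))
end Aux2

section Aux3
variable {X : Type*} [AddCommGroup X] [Lattice X]
    [CovariantClass X X (· + ·) (· ≤ ·)] [Module ℝ X]

theorem aux_final (hsmul : ∀ (c : ℝ) (x : X), 0 ≤ c → 0 ≤ x → 0 ≤ c • x)
    {a w : X} (ha : 0 < a) (hw : w ⊓ a = 0) {c : ℝ} (hc : 0 < c)
    (h : c • a ≤ w) : False := by
  set c' := min c 1 with hc'def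
  have hc' : 0 < c' := lt_min hc one_pos
  have h1 : c' • a ≤ w := (aux_smul_mono hsmul (min_le_left c 1) ha.le).trans h
  have h2 : c' • a ≤ a := by
    have := aux_smul_mono hsmul (min_le_right c 1) ha.le
    rwa [one_smul] at this
  have h3 : c' • a ≤ 0 := hw ▸ le_inf h1 h2
  have h4 : c' • a = 0 := le_antisymm h3 (hsmul c' a hc'.le ha.le)
  have h5 : a = 0 := by
    have := congrArg (fun v => c'⁻¹ • v) h4
    simpa [smul_smul, inv_mul_cancel₀ hc'.ne'] using this
  exact ha.ne' h5
end Aux3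


/-- Let X be an atomic Archimedean vector lattice with a maximal family 𝒜
of pairwise disjoint atoms and coordinate functionals φ_a (so `x - φ_a(x)·a ⊥ a`).
Then x ∈ X is positive iff φ_a(x) ≥ 0 for every a ∈ 𝒜. -/
theorem stmt3 {X : Type*} [AddCommGroup X] [Lattice X]
    [CovariantClass X X (· + ·) (· ≤ ·)] [Module ℝ X]
    (hsmul : ∀ (c : ℝ) (x : X), 0 ≤ c → 0 ≤ x → 0 ≤ c • x)
    (harch : ∀ x y : X, (∀ n : ℕ, n • x ≤ y) → x ≤ 0)
    (𝒜 : Set X) (hatom : ∀ a ∈ 𝒜, VLAtom a)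
    (hdisj : ∀ a ∈ 𝒜, ∀ b ∈ 𝒜, a ≠ b → a ⊓ b = 0)
    (hmax : ∀ c : X, VLAtom c → ∃ a ∈ 𝒜, a ⊓ c ≠ 0)
    (hdense : ∀ x : X, 0 < x → ∃ y ∈ Submodule.span ℝ 𝒜, 0 < y ∧ y ≤ x)
    (φ : X → X →ₗ[ℝ] ℝ)
    (hφ : ∀ a ∈ 𝒜, ∀ x : X, |x - φ a x • a| ⊓ a = 0)
    (x : X) :
    0 ≤ x ↔ ∀ a ∈ 𝒜, 0 ≤ φ a x := by
  classical
  constructor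
  · intro hx a ha
    by_contra hneg
    push_neg at hneg
    have ha0 : 0 < a := (hatom a ha).1
    set r := φ a x with hr
    set z := x - r • a with hz
    have hza : |z| ⊓ a = 0 := hφ a ha x
    have h1 : (-r) • a ≤ |z| := by
      have e : (-r) • a = z - x := by rw [neg_smul, hz]; abel
      rw [e]
      exact (sub_le_self z hx).trans (le_abs_self z)
    exact aux_final hsmul ha0 hza (by linarith : (0:ℝ) < -r) h1
  · intro h
    by_contra hx
    set n := (-x) ⊔ 0 with hn
    have hn0 : 0 ≤ n := le_sup_right
    have hnpos : 0 < n := by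
      rcases hn0.lt_or_eq with h' | h'
      · exact h'
      · exact absurd (neg_nonpos.mp (le_sup_left.trans h'.symm.le)) hx
    obtain ⟨y, hy, hy0, hyn⟩ := hdense n hnpos
    rw [Submodule.mem_span_set] at hy
    obtain ⟨f, hsupp, hsum⟩ := hy
    set s := f.support with hs
    have hsA : ∀ a ∈ s, a ∈ 𝒜 := fun a haa => hsupp haa
    have hpos : ∀ a ∈ s, 0 < a := fun a haa => (hatom a (hsA a haa)).1
    set g : X → X := fun a => (max (f a) 0) • a with hg
    set g' : X → X := fun a => (max (-(f a)) 0) • a with hg'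
    set u := ∑ a ∈ s, g a with hu
    set v := ∑ a ∈ s, g' a with hv
    have hgnn : ∀ a ∈ s, 0 ≤ g a :=
      fun a haa => hsmul _ _ (le_max_right _ _) (hpos a haa).le
    have hg'nn : ∀ a ∈ s, 0 ≤ g' a :=
      fun a haa => hsmul _ _ (le_max_right _ _) (hpos a haa).le
    have hunn : 0 ≤ u := aux_sum_nonneg s g hgnn
    have hvnn : 0 ≤ v := aux_sum_nonneg s g' hg'nn
    have huv : u - v = y := by
      rw [hu, hv, ← Finset.sum_sub_distrib, ← hsum, Finsupp.sum]
      refine Finset.sum_congr rfl fun a haa => ?_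
      rw [hg, hg', ← sub_smul]
      congr 1
      rcases le_total (f a) 0 with hfa | hfa
      · rw [max_eq_right hfa, max_eq_left (neg_nonneg.2 hfa)]; ring
      · rw [max_eq_left hfa, max_eq_right (neg_nonpos.2 hfa)]; ring
    -- pairwise disjointness of terms of u and v
    have hterm : ∀ a ∈ s, ∀ b ∈ s, g a ⊓ g' b = 0 := by
      intro a haa b hbb
      by_cases hab : a = b
      · subst hab
        rcases le_total (f a) 0 with hfa | hfa
        · have : g a = 0 := by rw [hg]; simp [max_eq_right hfa]
          rw [this]
          exact inf_eq_left.2 (hg'nn a haa)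
        · have : g' a = 0 := by rw [hg']; simp [max_eq_right (neg_nonpos.2 hfa)]
          rw [this]
          exact inf_eq_right.2 (hgnn a haa)
      · have hab0 : a ⊓ b = 0 := hdisj a (hsA a haa) b (hsA b hbb) hab
        have h1 : (max (f a) 0 • a) ⊓ b = 0 :=
          aux_smul_inf hsmul (hpos a haa).le (hpos b hbb).le hab0 (le_max_right _ _)
        have h2 : (max (-(f b)) 0 • b) ⊓ (max (f a) 0 • a) = 0 :=
          aux_smul_inf hsmul (hpos b hbb).le
            (hsmul _ _ (le_max_right _ _) (hpos a haa).le)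
            (by rw [inf_comm]; exact h1) (le_max_right _ _)
        rw [hg, hg', inf_comm]
        exact h2
    have hvu0 : v ⊓ u = 0 := by
      refine aux_sum_inf s g' u hunn hg'nn fun b hbb => ?_
      rw [inf_comm]
      exact aux_sum_inf s g (g' b) (hg'nn b hbb) hgnn fun a haa => hterm a haa b hbb
    have hvle : v ≤ u := by
      have : v = u - y := by rw [← huv]; abel
      rw [this]
      exact sub_le_self u hy0.le
    have hv0 : v = 0 := by
      have := inf_eq_left.2 hvle
      rw [hvu0] at this
      exact this.symm
    have hyu : y = u := by rw [← huv, hv0, sub_zero]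
    -- find a nonzero term
    have : ∃ a ∈ s, g a ≠ 0 := by
      by_contra hall
      push_neg at hall
      have : u = 0 := Finset.sum_eq_zero hall
      rw [this] at hyu
      exact hy0.ne' hyu
    obtain ⟨a, haa, hga⟩ := this
    have haA : a ∈ 𝒜 := hsA a haa
    set c := max (f a) 0 with hc
    have hcpos : 0 < c := by
      rcases (le_max_right (f a) 0).lt_or_eq with h' | h'
      · exact h'
      · exact absurd (by rw [hg]; simp [← h']) hga
    have hterm_le : c • a ≤ u := by
      rw [hu, ← Finset.add_sum_erase s g haa]
      exact le_add_of_nonneg_right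
        (aux_sum_nonneg _ g fun j hj => hgnn j (Finset.mem_of_mem_erase hj))
    have hca_n : c • a ≤ n := hterm_le.trans (hyu ▸ hyn)
    -- now contradiction via φ a x ≥ 0
    have hr : 0 ≤ φ a x := h a haA
    set z := x - φ a x • a with hz
    have hza : |z| ⊓ a = 0 := hφ a haA x
    have hnz : n ≤ |z| := by
      have e1 : -x ≤ -z := by
        rw [hz, neg_sub]
        have h0 : 0 ≤ φ a x • a := hsmul _ _ hr ((hatom a haA).1).le
        simpa [zero_sub] using sub_le_sub_right h0 x
      have e2 : n ≤ (-z) ⊔ 0 := sup_le_sup_right e1 0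
      exact e2.trans (sup_le (neg_le_abs z) (abs_nonneg z))
    exact aux_final hsmul ((hatom a haA).1) hza hcpos (hca_n.trans hnz)
end

section
/- Every finite-dimensional vector subspace of an Archimedean vector lattice is order closed: if a net in the subspace converges in order to some element of the lattice, then the limit belongs to the subspace. -/
/-- Order convergence of a net `x : ι → X` (indexed by a directed relation `r`) to `x₀`. -/
def OConv {X : Type*} [AddCommGroup X] [Lattice X] {ι : Type}
    (r : ι → ι → Prop) (x : ι → X) (x₀ : X) : Prop :=
  ∃ (κ : Type) (s : κ → κ → Prop) (y : κ → X),
    Nonempty κ ∧ (∀ β β' : κ, s β β' → y β' ≤ y β) ∧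
    (∀ β β' : κ, ∃ γ : κ, s β γ ∧ s β' γ) ∧
    IsGLB (Set.range y) (0 : X) ∧
    ∀ β : κ, ∃ α₀ : ι, ∀ α : ι, r α₀ α → |x α - x₀| ≤ y β

section Aux

variable {X : Type*} [AddCommGroup X] [Lattice X]
    [CovariantClass X X (· + ·) (· ≤ ·)] [Module ℝ X]

/-- Monotonicity of scalar multiplication in the vector variable. -/
lemma smul_mono_aux (hsmul : ∀ (c : ℝ) (x : X), 0 ≤ c → 0 ≤ x → 0 ≤ c • x)
    {c : ℝ} (hc : 0 ≤ c) {a b : X} (h : a ≤ b) : c • a ≤ c • b := by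
  have := hsmul c (b - a) hc (sub_nonneg.2 h)
  rwa [smul_sub, sub_nonneg] at this

/-- Monotonicity of scalar multiplication in the scalar variable. -/
lemma smul_mono_scalar_aux (hsmul : ∀ (c : ℝ) (x : X), 0 ≤ c → 0 ≤ x → 0 ≤ c • x)
    {s t : ℝ} (h : s ≤ t) {a : X} (ha : 0 ≤ a) : s • a ≤ t • a := by
  have := hsmul (t - s) a (by linarith) ha
  rwa [sub_smul, sub_nonneg] at this

lemma smul_le_abs_aux (hsmul : ∀ (c : ℝ) (x : X), 0 ≤ c → 0 ≤ x → 0 ≤ c • x)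
    {s t : ℝ} (h : |s| ≤ t) (a : X) : s • a ≤ t • |a| := by
  obtain ⟨h1, h2⟩ := abs_le.mp h
  have key : t • |a| - s • a = ((t + s) / 2) • (|a| - a) + ((t - s) / 2) • (|a| + a) := by
    module
  have p1 : (0 : X) ≤ ((t + s) / 2) • (|a| - a) :=
    hsmul _ _ (by linarith) (sub_nonneg.2 (le_abs_self a))
  have p2 : (0 : X) ≤ ((t - s) / 2) • (|a| + a) :=
    hsmul _ _ (by linarith) (by rw [← sub_neg_eq_add]; exact sub_nonneg.2 (neg_le_abs a))
  have h3 : (0 : X) ≤ t • |a| - s • a := by rw [key]; exact add_nonneg p1 p2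
  exact sub_nonneg.mp h3

lemma abs_smul_le_aux (hsmul : ∀ (c : ℝ) (x : X), 0 ≤ c → 0 ≤ x → 0 ≤ c • x)
    {r : ℝ} (hr : 0 ≤ r) (v : X) : |r • v| ≤ r • |v| := by
  refine abs_le'.2 ⟨smul_mono_aux hsmul hr (le_abs_self v), ?_⟩
  rw [← smul_neg]
  exact smul_mono_aux hsmul hr (neg_le_abs v)

/-- Archimedean ε-lemma. -/
lemma arch_eps_aux (hsmul : ∀ (c : ℝ) (x : X), 0 ≤ c → 0 ≤ x → 0 ≤ c • x)
    (harch : ∀ x y : X, (∀ n : ℕ, n • x ≤ y) → x ≤ 0)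
    {a z w : X} (hw : 0 ≤ w) (h : ∀ ε : ℝ, 0 < ε → a ≤ ε • w + z) : a ≤ z := by
  rw [← sub_nonpos]
  apply harch (a - z) w
  intro n
  cases n with
  | zero => simpa using hw
  | succ m =>
    have hn : (0 : ℝ) < ((m + 1 : ℕ) : ℝ) := by positivity
    have h1 := h ((m + 1 : ℕ) : ℝ)⁻¹ (by positivity)
    have h2 : a - z ≤ ((m + 1 : ℕ) : ℝ)⁻¹ • w := by
      rwa [← sub_le_iff_le_add] at h1
    have h3 := smul_mono_aux hsmul hn.le h2
    rw [smul_smul, mul_inv_cancel₀ hn.ne', one_smul] at h3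
    rwa [← Nat.cast_smul_eq_nsmul ℝ]


lemma sum_nonneg_aux {X : Type*} [AddCommGroup X] [Lattice X]
    [CovariantClass X X (· + ·) (· ≤ ·)] {ι : Type*} (t : Finset ι) (f : ι → X)
    (h : ∀ i ∈ t, (0 : X) ≤ f i) : (0 : X) ≤ ∑ i ∈ t, f i := by
  classical
  induction t using Finset.induction with
  | empty => simp
  | insert _ _ hni ih =>
    rw [Finset.sum_insert hni]
    exact add_nonneg (h _ (Finset.mem_insert_self _ _))
      (ih fun i hi => h i (Finset.mem_insert_of_mem hi))

lemma sum_le_sum_aux {X : Type*} [AddCommGroup X] [Lattice X]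
    [CovariantClass X X (· + ·) (· ≤ ·)] {ι : Type*} (t : Finset ι) (f g : ι → X)
    (h : ∀ i ∈ t, f i ≤ g i) : ∑ i ∈ t, f i ≤ ∑ i ∈ t, g i := by
  classical
  induction t using Finset.induction with
  | empty => simp
  | insert _ _ hni ih =>
    rw [Finset.sum_insert hni, Finset.sum_insert hni]
    exact add_le_add (h _ (Finset.mem_insert_self _ _))
      (ih fun i hi => h i (Finset.mem_insert_of_mem hi))

end Aux

/-- Every finite-dimensional vector subspace of an Archimedean vector
lattice is order closed: if a net in the subspace order converges to some element
of the lattice, then the limit belongs to the subspace. -/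
theorem stmt5 {X : Type*} [AddCommGroup X] [Lattice X]
    [CovariantClass X X (· + ·) (· ≤ ·)] [Module ℝ X]
    (hsmul : ∀ (c : ℝ) (x : X), 0 ≤ c → 0 ≤ x → 0 ≤ c • x)
    (harch : ∀ x y : X, (∀ n : ℕ, n • x ≤ y) → x ≤ 0)
    (V : Submodule ℝ X) [FiniteDimensional ℝ V]
    (ι : Type) (r : ι → ι → Prop) (hne : Nonempty ι)
    (hdir : ∀ α α' : ι, ∃ γ : ι, r α γ ∧ r α' γ)
    (x : ι → X) (hx : ∀ α, x α ∈ V) (x₀ : X)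
    (hconv : OConv r x x₀) : x₀ ∈ V := by
  classical
  obtain ⟨κ, s, y, ⟨β₀⟩, hanti, hsdir, hglb, hbound⟩ := hconv
  have hy0 : ∀ β, (0 : X) ≤ y β := fun β => hglb.1 (Set.mem_range_self β)
  have happrox : ∀ β : κ, ∃ α : ι, |x α - x₀| ≤ y β := by
    intro β
    obtain ⟨α₀, hα₀⟩ := hbound β
    obtain ⟨γ, hγ, -⟩ := hdir α₀ α₀
    exact ⟨γ, hα₀ γ hγ⟩
  set n := Module.finrank ℝ V with hn
  let b : Module.Basis (Fin n) ℝ V := Module.finBasis ℝ V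
  let L : (Fin n → ℝ) →ₗ[ℝ] X := V.subtype.comp (b.equivFun.symm : (Fin n → ℝ) →ₗ[ℝ] V)
  have hLmem : ∀ c, L c ∈ V := fun c => (b.equivFun.symm c).2
  have hLinj : Function.Injective L := Subtype.coe_injective.comp b.equivFun.symm.injective
  have hLsurj : ∀ v : X, v ∈ V → ∃ c, L c = v := by
    intro v hv
    refine ⟨b.equivFun ⟨v, hv⟩, ?_⟩
    show V.subtype (b.equivFun.symm (b.equivFun ⟨v, hv⟩)) = v
    rw [b.equivFun.symm_apply_apply]
    rfl
  set w : X := ∑ i : Fin n, |L (Pi.single i 1)| with hw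
  have hw0 : (0 : X) ≤ w := sum_nonneg_aux _ _ fun i _ => abs_nonneg _
  have hrep : ∀ d : Fin n → ℝ, L d = ∑ i : Fin n, d i • L (Pi.single i 1) := by
    intro d
    have hd : d = ∑ i : Fin n, d i • (Pi.single i (1 : ℝ) : Fin n → ℝ) := by
      have h1 : ∀ i : Fin n, d i • (Pi.single i (1 : ℝ) : Fin n → ℝ) = Pi.single i (d i) := by
        intro i
        ext j
        by_cases h : i = j <;> simp [Pi.single_apply, h]
      rw [Finset.sum_congr rfl fun i _ => h1 i]
      exact (Finset.univ_sum_single d).symm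
    conv_lhs => rw [hd]
    rw [map_sum]
    simp only [map_smul]
  have hLbound : ∀ (ε : ℝ) (d : Fin n → ℝ), (∀ i, |d i| ≤ ε) → |L d| ≤ ε • w := by
    intro ε d hd
    refine abs_le'.2 ⟨?_, ?_⟩
    · rw [hrep d, hw, Finset.smul_sum]
      exact sum_le_sum_aux _ _ _ fun i _ => smul_le_abs_aux hsmul (hd i) _
    · rw [hrep d, ← Finset.sum_neg_distrib, hw, Finset.smul_sum]
      refine sum_le_sum_aux _ _ _ fun i _ => ?_
      rw [← neg_smul]
      exact smul_le_abs_aux hsmul (by rw [abs_neg]; exact hd i) _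
  -- the family of closed sets
  set S : κ → Set (Fin n → ℝ) := fun β => {c | |L c - x₀| ≤ y β} with hS
  have hSmono : ∀ β γ, s β γ → S γ ⊆ S β := fun β γ h c hc => le_trans hc (hanti _ _ h)
  have hSnonempty : ∀ β, (S β).Nonempty := by
    intro β
    obtain ⟨α, hα⟩ := happrox β
    obtain ⟨c, hc⟩ := hLsurj (x α) (hx α)
    exact ⟨c, by simp only [hS, Set.mem_setOf_eq, hc]; exact hα⟩
  have hSclosed : ∀ β, IsClosed (S β) := by
    intro β
    apply IsSeqClosed.isClosed
    intro cs c hcs hlim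
    show |L c - x₀| ≤ y β
    apply arch_eps_aux hsmul harch hw0
    intro ε hε
    rw [Metric.tendsto_atTop] at hlim
    obtain ⟨K, hK⟩ := hlim ε hε
    have hco : ∀ i, |(c - cs K) i| ≤ ε := by
      intro i
      have h1 : ‖(c - cs K) i‖ ≤ ‖c - cs K‖ := norm_le_pi_norm _ i
      have h2 : ‖c - cs K‖ = dist (cs K) c := by rw [dist_eq_norm, ← norm_neg]; ring_nf
      rw [Real.norm_eq_abs] at h1
      calc |(c - cs K) i| ≤ ‖c - cs K‖ := h1
        _ = dist (cs K) c := h2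
        _ ≤ ε := (hK K le_rfl).le
    have hsplit : L c - x₀ = L (c - cs K) + (L (cs K) - x₀) := by
      rw [map_sub]; abel
    calc |L c - x₀| = |L (c - cs K) + (L (cs K) - x₀)| := by rw [hsplit]
      _ ≤ |L (c - cs K)| + |L (cs K) - x₀| := abs_add_le _ _
      _ ≤ ε • w + y β := add_le_add (hLbound ε _ hco) (hcs K)
  -- boundedness of S β₀
  have hbdd : ∃ C : ℝ, ∀ c ∈ S β₀, ‖c‖ ≤ C := by
    by_contra hcon
    push_neg at hcon
    choose cs hcsS hcsn using fun k : ℕ => hcon ((k : ℝ) + 1)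
    have hpos : ∀ k, (0 : ℝ) < ‖cs k‖ := fun k =>
      lt_of_le_of_lt (by positivity) (hcsn k)
    set ds : ℕ → Fin n → ℝ := fun k => ‖cs k‖⁻¹ • cs k with hds
    have hsph : ∀ k, ds k ∈ Metric.sphere (0 : Fin n → ℝ) 1 := by
      intro k
      rw [mem_sphere_zero_iff_norm, hds]
      rw [norm_smul, Real.norm_eq_abs, abs_of_pos (inv_pos.2 (hpos k)),
        inv_mul_cancel₀ (hpos k).ne']
    obtain ⟨d, hd, φ, hφ, hφlim⟩ := (isCompact_sphere (0 : Fin n → ℝ) 1).tendsto_subseq hsph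
    have hdnorm : ‖d‖ = 1 := mem_sphere_zero_iff_norm.mp hd
    set W : X := y β₀ + |x₀| with hW
    have hW0 : (0 : X) ≤ W := add_nonneg (hy0 β₀) (abs_nonneg _)
    have hLcs : ∀ k, |L (cs k)| ≤ W := by
      intro k
      have h1 : L (cs k) = (L (cs k) - x₀) + x₀ := by abel
      calc |L (cs k)| = |(L (cs k) - x₀) + x₀| := by rw [← h1]
        _ ≤ |L (cs k) - x₀| + |x₀| := abs_add_le _ _
        _ ≤ y β₀ + |x₀| := add_le_add (hcsS k) le_rfl
    have hzero : |L d| ≤ 0 := by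
      have hww : (0 : X) ≤ w + W := add_nonneg hw0 hW0
      have key : ∀ ε : ℝ, 0 < ε → |L d| ≤ ε • (w + W) + 0 := by
        intro ε hε
        rw [Metric.tendsto_atTop] at hφlim
        obtain ⟨K₁, hK₁⟩ := hφlim ε hε
        set k := max K₁ (⌈ε⁻¹⌉₊ + 1) with hk
        set m := φ k with hm
        have hdist : dist (ds m) d < ε := hK₁ k (le_max_left _ _)
        have hminv : ‖cs m‖⁻¹ ≤ ε := by
          have h1 : ε⁻¹ < ‖cs m‖ := by
            have h2 : (⌈ε⁻¹⌉₊ : ℝ) + 1 ≤ (k : ℝ) := by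
              exact_mod_cast le_max_right K₁ (⌈ε⁻¹⌉₊ + 1)
            have h3 : (k : ℝ) ≤ (m : ℝ) := by exact_mod_cast hφ.le_apply
            have h4 : ε⁻¹ ≤ (⌈ε⁻¹⌉₊ : ℝ) := Nat.le_ceil _
            calc ε⁻¹ ≤ (⌈ε⁻¹⌉₊ : ℝ) := h4
              _ < (k : ℝ) := by linarith
              _ ≤ (m : ℝ) := h3
              _ < (m : ℝ) + 1 := by linarith
              _ < ‖cs m‖ := hcsn m
          have h5 := inv_strictAnti₀ (inv_pos.2 hε) h1
          rw [inv_inv] at h5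
          exact h5.le
        have hco : ∀ i, |(d - ds m) i| ≤ ε := by
          intro i
          have h1 : ‖(d - ds m) i‖ ≤ ‖d - ds m‖ := norm_le_pi_norm _ i
          have h2 : ‖d - ds m‖ = dist (ds m) d := by
            rw [dist_eq_norm, ← norm_neg]; ring_nf
          rw [Real.norm_eq_abs] at h1
          calc |(d - ds m) i| ≤ ‖d - ds m‖ := h1
            _ = dist (ds m) d := h2
            _ ≤ ε := hdist.le
        have hsplit : L d = L (d - ds m) + L (ds m) := by rw [map_sub]; abel
        have hbound2 : |L (ds m)| ≤ ε • W := by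
          have h1 : L (ds m) = ‖cs m‖⁻¹ • L (cs m) := by rw [hds]; simp [map_smul]
          calc |L (ds m)| = |‖cs m‖⁻¹ • L (cs m)| := by rw [h1]
            _ ≤ ‖cs m‖⁻¹ • |L (cs m)| := abs_smul_le_aux hsmul (by positivity) _
            _ ≤ ‖cs m‖⁻¹ • W := smul_mono_aux hsmul (by positivity) (hLcs m)
            _ ≤ ε • W := smul_mono_scalar_aux hsmul hminv hW0
        calc |L d| = |L (d - ds m) + L (ds m)| := by rw [hsplit]
          _ ≤ |L (d - ds m)| + |L (ds m)| := abs_add_le _ _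
          _ ≤ ε • w + ε • W := add_le_add (hLbound ε _ hco) hbound2
          _ = ε • (w + W) + 0 := by rw [← smul_add, add_zero]
      exact arch_eps_aux hsmul harch hww key
    have hLd0 : L d = 0 := by
      have h1 : L d ≤ 0 := le_trans (le_abs_self _) hzero
      have h2 : (0 : X) ≤ L d := neg_nonpos.mp (le_trans (neg_le_abs _) hzero)
      exact le_antisymm h1 h2
    have : d = 0 := hLinj (by rw [hLd0, map_zero])
    rw [this, norm_zero] at hdnorm
    norm_num at hdnorm
  obtain ⟨C, hC⟩ := hbdd
  -- compact intersection argument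
  set T : κ → Set (Fin n → ℝ) := fun β => S β ∩ S β₀ with hT
  have hTne : ∀ β, (T β).Nonempty := by
    intro β
    obtain ⟨γ, h1, h2⟩ := hsdir β β₀
    obtain ⟨c, hc⟩ := hSnonempty γ
    exact ⟨c, hSmono _ _ h1 hc, hSmono _ _ h2 hc⟩
  have hTdir : Directed (· ⊇ ·) T := by
    intro β β'
    obtain ⟨γ, h1, h2⟩ := hsdir β β'
    exact ⟨γ, Set.inter_subset_inter_left _ (hSmono _ _ h1),
      Set.inter_subset_inter_left _ (hSmono _ _ h2)⟩
  have hTclosed : ∀ β, IsClosed (T β) := fun β => (hSclosed β).inter (hSclosed β₀)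
  have hTcompact : ∀ β, IsCompact (T β) := by
    intro β
    apply IsCompact.of_isClosed_subset (isCompact_closedBall (0 : Fin n → ℝ) C) (hTclosed β)
    intro c hc
    rw [mem_closedBall_zero_iff]
    exact hC c hc.2
  haveI : Nonempty κ := ⟨β₀⟩
  obtain ⟨c, hc⟩ := IsCompact.nonempty_iInter_of_directed_nonempty_isCompact_isClosed
    T hTdir hTne hTcompact hTclosed
  have hcall : ∀ β, |L c - x₀| ≤ y β := fun β => (Set.mem_iInter.mp hc β).1
  have hlb : |L c - x₀| ∈ lowerBounds (Set.range y) := by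
    rintro _ ⟨β, rfl⟩
    exact hcall β
  have h0 : |L c - x₀| ≤ 0 := hglb.2 hlb
  have heq : L c - x₀ = 0 := by
    have h1 : L c - x₀ ≤ 0 := le_trans (le_abs_self _) h0
    have h2 : (0 : X) ≤ L c - x₀ := neg_nonpos.mp (le_trans (neg_le_abs _) h0)
    exact le_antisymm h1 h2
  have : x₀ = L c := by rw [sub_eq_zero] at heq; exact heq.symm
  rw [this]
  exact hLmem c
end

section
/- Every one-dimensional subspace ℝv of an Archimedean vector lattice is order closed. -/
section Aux
variable {X : Type*} [AddCommGroup X] [Lattice X]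
    [CovariantClass X X (· + ·) (· ≤ ·)] [Module ℝ X]

lemma my_smul_mono (hsmul : ∀ (c : ℝ) (x : X), 0 ≤ c → 0 ≤ x → 0 ≤ c • x)
    {t : ℝ} (ht : 0 ≤ t) {a b : X} (h : a ≤ b) : t • a ≤ t • b := by
  have h1 := hsmul t (b - a) ht (by simpa using h)
  rw [smul_sub, sub_nonneg] at h1
  exact h1

lemma my_smul_mono_left (hsmul : ∀ (c : ℝ) (x : X), 0 ≤ c → 0 ≤ x → 0 ≤ c • x)
    {s t : ℝ} (hst : s ≤ t) {a : X} (ha : 0 ≤ a) : s • a ≤ t • a := by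
  have h1 := hsmul (t - s) a (by linarith) ha
  rw [sub_smul, sub_nonneg] at h1
  exact h1

lemma my_abs_def (a : X) : |a| = a ⊔ -a := rfl

lemma my_abs_nonneg (hsmul : ∀ (c : ℝ) (x : X), 0 ≤ c → 0 ≤ x → 0 ≤ c • x)
    (a : X) : 0 ≤ |a| := by
  have h1 : (0 : X) ≤ |a| + |a| := by
    have h := add_le_add (le_sup_left : a ≤ a ⊔ -a) (le_sup_right : -a ≤ a ⊔ -a)
    rw [my_abs_def]
    simpa using h
  have h2 : (0 : X) ≤ (2 : ℝ) • |a| := by rw [two_smul]; exact h1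
  have h3 := hsmul (1/2) _ (by norm_num) h2
  rwa [smul_smul, (by norm_num : (1:ℝ)/2 * 2 = 1), one_smul] at h3

lemma my_abs_eq_zero (hsmul : ∀ (c : ℝ) (x : X), 0 ≤ c → 0 ≤ x → 0 ≤ c • x)
    {a : X} (h : |a| ≤ 0) : a = 0 := by
  rw [my_abs_def] at h
  have h1 : a ≤ 0 := le_trans le_sup_left h
  have h2 : -a ≤ 0 := le_trans le_sup_right h
  exact le_antisymm h1 (by simpa using h2)

lemma my_abs_sub (a b : X) : |a - b| ≤ |a| + |b| := by
  rw [my_abs_def, my_abs_def, my_abs_def]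
  apply sup_le
  · rw [sub_eq_add_neg]
    exact add_le_add le_sup_left le_sup_right
  · rw [(by abel : -(a - b) = -a + b)]
    exact add_le_add le_sup_right le_sup_left

lemma my_smul_sup (hsmul : ∀ (c : ℝ) (x : X), 0 ≤ c → 0 ≤ x → 0 ≤ c • x)
    {t : ℝ} (ht : 0 < t) (a b : X) : t • (a ⊔ b) = (t • a) ⊔ (t • b) := by
  apply le_antisymm
  · have ha : a ≤ t⁻¹ • ((t • a) ⊔ (t • b)) := by
      have h := my_smul_mono hsmul (le_of_lt (inv_pos.mpr ht))
        (le_sup_left : t • a ≤ (t • a) ⊔ (t • b))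
      rwa [inv_smul_smul₀ ht.ne'] at h
    have hb : b ≤ t⁻¹ • ((t • a) ⊔ (t • b)) := by
      have h := my_smul_mono hsmul (le_of_lt (inv_pos.mpr ht))
        (le_sup_right : t • b ≤ (t • a) ⊔ (t • b))
      rwa [inv_smul_smul₀ ht.ne'] at h
    have h := my_smul_mono hsmul ht.le (sup_le ha hb)
    rwa [smul_inv_smul₀ ht.ne'] at h
  · exact sup_le (my_smul_mono hsmul ht.le le_sup_left)
      (my_smul_mono hsmul ht.le le_sup_right)

lemma my_abs_smul (hsmul : ∀ (c : ℝ) (x : X), 0 ≤ c → 0 ≤ x → 0 ≤ c • x)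
    (d : ℝ) (v : X) : |d • v| = |d| • |v| := by
  have key : ∀ t : ℝ, 0 < t → |t • v| = t • |v| := by
    intro t ht
    rw [my_abs_def, my_abs_def, my_smul_sup hsmul ht, smul_neg]
  rcases lt_trichotomy d 0 with hd | hd | hd
  · have h : |d • v| = |(-d) • v| := by rw [neg_smul, abs_neg]
    rw [h, key (-d) (by linarith), abs_of_neg hd]
  · simp [hd]
  · rw [key d hd, abs_of_pos hd]

end Aux

/-- Every one-dimensional subspace ℝv of an Archimedean vector lattice
is order closed. -/
theorem stmt6 {X : Type*} [AddCommGroup X] [Lattice X]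
    [CovariantClass X X (· + ·) (· ≤ ·)] [Module ℝ X]
    (hsmul : ∀ (c : ℝ) (x : X), 0 ≤ c → 0 ≤ x → 0 ≤ c • x)
    (harch : ∀ x y : X, (∀ n : ℕ, n • x ≤ y) → x ≤ 0)
    (v : X)
    (ι : Type) (r : ι → ι → Prop) (hne : Nonempty ι)
    (hdir : ∀ α α' : ι, ∃ γ : ι, r α γ ∧ r α' γ)
    (x : ι → X) (hx : ∀ α, x α ∈ Submodule.span ℝ {v}) (x₀ : X)
    (hconv : OConv r x x₀) : x₀ ∈ Submodule.span ℝ {v} := by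
  obtain ⟨κ, s, y, hκne, hmono, hsdir, hglb, hev⟩ := hconv
  have hy0 : ∀ β, (0 : X) ≤ y β := fun β => hglb.1 ⟨β, rfl⟩
  have hx' : ∀ α, ∃ a : ℝ, a • v = x α := fun α =>
    (Submodule.mem_span_singleton).mp (hx α)
  choose c hc using hx'
  by_cases hv : v = 0
  · have hx0 : ∀ α, x α = 0 := fun α => by rw [← hc α, hv, smul_zero]
    have hlb : ∀ β, |x₀| ≤ y β := by
      intro β
      obtain ⟨α₀, hα₀⟩ := hev β
      obtain ⟨γ, hγ, -⟩ := hdir α₀ α₀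
      have h := hα₀ γ hγ
      rwa [hx0 γ, zero_sub, abs_neg] at h
    have h1 : |x₀| ≤ 0 := hglb.2 (fun w ⟨β, hβ⟩ => hβ ▸ hlb β)
    rw [my_abs_eq_zero hsmul h1]
    exact Submodule.zero_mem _
  · have hvpos : ¬ (|v| ≤ 0) := fun h => hv (my_abs_eq_zero hsmul h)
    -- Cauchy property of the scalar net
    have hcauchy : ∀ ε : ℝ, 0 < ε →
        ∃ α₀, ∀ α α', r α₀ α → r α₀ α' → |c α - c α'| ≤ ε := by
      intro ε hε
      by_contra hcon
      push_neg at hcon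
      have hlb : ∀ β, (ε / 2) • |v| ≤ y β := by
        intro β
        obtain ⟨α₀, hα₀⟩ := hev β
        obtain ⟨α, α', hrα, hrα', hgt⟩ := hcon α₀
        have h1 : ε • |v| ≤ |c α - c α'| • |v| :=
          my_smul_mono_left hsmul hgt.le (my_abs_nonneg hsmul v)
        have h2 : |c α - c α'| • |v| = |x α - x α'| := by
          rw [← my_abs_smul hsmul, sub_smul, hc, hc]
        have h3 : |x α - x α'| ≤ y β + y β := by
          have he : x α - x α' = (x α - x₀) - (x α' - x₀) := by abel
          rw [he]
          exact le_trans (my_abs_sub (x α - x₀) (x α' - x₀))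
            (add_le_add (hα₀ α hrα) (hα₀ α' hrα'))
        have h4 : ε • |v| ≤ (2 : ℝ) • y β := by
          rw [two_smul]; exact le_trans (h1.trans_eq h2) h3
        calc (ε/2) • |v| = (1/2 : ℝ) • (ε • |v|) := by
              rw [smul_smul]; congr 1; ring
          _ ≤ (1/2 : ℝ) • ((2:ℝ) • y β) :=
              my_smul_mono hsmul (by norm_num) h4
          _ = y β := by rw [smul_smul]; norm_num
      have h6 : (ε / 2) • |v| ≤ 0 := hglb.2 (fun w ⟨β, hβ⟩ => hβ ▸ hlb β)
      have h7 : (0:X) ≤ (2/ε) • (-((ε/2) • |v|)) :=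
        hsmul _ _ (by positivity) (by simpa using h6)
      rw [smul_neg, smul_smul] at h7
      have he : (2/ε) * (ε/2) = 1 := by field_simp
      rw [he, one_smul] at h7
      exact hvpos (by simpa using h7)
    -- construct the limit of the scalar net
    choose f hf using fun n : ℕ => hcauchy (1/(n+1)) (by positivity)
    choose a ha _ using fun n : ℕ => hdir (f n) (f n)
    set d : ℕ → ℝ := fun n => c (a n) with hd
    have hdnm : ∀ n m : ℕ, |d n - d m| ≤ 1/(n+1) + 1/(m+1) := by
      intro n m
      obtain ⟨γ, hγn, hγm⟩ := hdir (f n) (f m)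
      have h1 : |d n - c γ| ≤ 1/(n+1) := hf n (a n) γ (ha n) hγn
      have h2 : |d m - c γ| ≤ 1/(m+1) := hf m (a m) γ (ha m) hγm
      calc |d n - d m| = |(d n - c γ) - (d m - c γ)| := by ring_nf
        _ ≤ |d n - c γ| + |d m - c γ| := abs_sub _ _
        _ ≤ _ := add_le_add h1 h2
    have hcast : ∀ {N n : ℕ}, N ≤ n → (1:ℝ)/(n+1) ≤ 1/(N+1) := by
      intro N n hn
      apply one_div_le_one_div_of_le (by positivity)
      have h := (Nat.cast_le (α := ℝ)).mpr hn
      linarith only [h]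
    have hcs : CauchySeq d := by
      rw [Metric.cauchySeq_iff']
      intro ε hε
      obtain ⟨N, hN⟩ := exists_nat_one_div_lt (by positivity : (0:ℝ) < ε/2)
      refine ⟨N, fun n hn => ?_⟩
      have h1 := hdnm n N
      have h2 := hcast hn
      rw [Real.dist_eq]
      have hN' : (1:ℝ)/(N+1) < ε/2 := by push_cast at hN ⊢; linarith only [hN]
      calc |d n - d N| ≤ 1/(n+1) + 1/(N+1) := h1
        _ ≤ 1/(N+1) + 1/(N+1) := by linarith only [h2]
        _ < ε/2 + ε/2 := by linarith only [hN']
        _ = ε := by ring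
    obtain ⟨L, hL⟩ := cauchySeq_tendsto_of_complete hcs
    have hlim : ∀ ε : ℝ, 0 < ε → ∃ α₀, ∀ α, r α₀ α → |c α - L| ≤ ε := by
      intro ε hε
      have h1 : ∀ᶠ m in Filter.atTop, |d m - L| ≤ ε/2 := by
        obtain ⟨N, hN⟩ := Metric.tendsto_atTop.mp hL (ε/2) (by positivity)
        exact Filter.eventually_atTop.mpr ⟨N, fun m hm => le_of_lt (by
          have h := hN m hm; rwa [Real.dist_eq] at h)⟩
      have h2 : ∀ᶠ m : ℕ in Filter.atTop, (1:ℝ)/(m+1) ≤ ε/2 := by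
        obtain ⟨N, hN⟩ := exists_nat_one_div_lt (by positivity : (0:ℝ) < ε/2)
        refine Filter.eventually_atTop.mpr ⟨N, fun m hm => ?_⟩
        have h3 := hcast hm
        have hN' : (1:ℝ)/(N+1) < ε/2 := by push_cast at hN ⊢; linarith only [hN]
        linarith only [h3, hN']
      obtain ⟨m, hm1, hm2⟩ := (h1.and h2).exists
      refine ⟨f m, fun α hα => ?_⟩
      have h4 : |c α - d m| ≤ 1/(m+1) := hf m α (a m) hα (ha m)
      calc |c α - L| = |(c α - d m) + (d m - L)| := by ring_nf
        _ ≤ |c α - d m| + |d m - L| := abs_add_le _ _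
        _ ≤ ε/2 + ε/2 := add_le_add (h4.trans hm2) hm1
        _ = ε := by ring
    -- show x₀ = L • v
    set w : X := |x₀ - L • v| with hw
    have hweps : ∀ ε : ℝ, 0 < ε → w ≤ ε • |v| := by
      intro ε hε
      have hlb : ∀ β, w - ε • |v| ≤ y β := by
        intro β
        obtain ⟨α₀, hα₀⟩ := hev β
        obtain ⟨α₁, hα₁⟩ := hlim ε hε
        obtain ⟨γ, hγ0, hγ1⟩ := hdir α₀ α₁
        have h1 : |x γ - x₀| ≤ y β := hα₀ γ hγ0
        have h2 : |c γ - L| ≤ ε := hα₁ γ hγ1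
        have h4 : |x γ - L • v| ≤ ε • |v| := by
          rw [(by rw [← my_abs_smul hsmul, sub_smul, hc] :
            |x γ - L • v| = |c γ - L| • |v|)]
          exact my_smul_mono_left hsmul h2 (my_abs_nonneg hsmul v)
        have h5 : w ≤ y β + ε • |v| := by
          calc w = |(x γ - L • v) - (x γ - x₀)| := by rw [hw]; congr 1; abel
            _ ≤ |x γ - L • v| + |x γ - x₀| := my_abs_sub _ _
            _ ≤ ε • |v| + y β := add_le_add h4 h1
            _ = y β + ε • |v| := add_comm _ _
        exact sub_le_iff_le_add.mpr h5
      have h6 : w - ε • |v| ≤ 0 := hglb.2 (fun z ⟨β, hβ⟩ => hβ ▸ hlb β)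
      exact sub_nonpos.mp h6
    have hwn : ∀ n : ℕ, n • w ≤ |v| := by
      intro n
      rcases Nat.eq_zero_or_pos n with hn | hn
      · simpa [hn] using my_abs_nonneg hsmul v
      · have hn' : (0:ℝ) < n := by exact_mod_cast hn
        have h1 : w ≤ (1/n : ℝ) • |v| := hweps _ (by positivity)
        have h2 := my_smul_mono hsmul hn'.le h1
        rw [smul_smul] at h2
        have h3 : (n:ℝ) * (1/n) = 1 := by field_simp
        rw [h3, one_smul] at h2
        calc n • w = (n:ℝ) • w := (Nat.cast_smul_eq_nsmul ℝ n w).symm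
          _ ≤ |v| := h2
    have h7 : w ≤ 0 := harch w |v| hwn
    have h8 : x₀ - L • v = 0 := my_abs_eq_zero hsmul h7
    have h9 : x₀ = L • v := by rw [← sub_eq_zero]; exact h8
    rw [h9]
    exact Submodule.mem_span_singleton.mpr ⟨L, rfl⟩
end

section
/- Let X be an Archimedean vector lattice with maximal family 𝒜 of pairwise disjoint atoms, and let 𝒜₀ = span{a⊗φ_b : a,b ∈ 𝒜}. Then 𝒜₀ is a vector lattice under the operator order, and for T = Σ_{a,b∈F} λ_{ab}(a⊗φ_b) (F ⊆ 𝒜 finite) the modulus is |T| = Σ_{a,b∈F} |λ_{ab}|(a⊗φ_b). -/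
set_option linter.unusedSectionVars false
section helpers
variable {X : Type*} [AddCommGroup X] [Lattice X]
  [CovariantClass X X (· + ·) (· ≤ ·)] [Module ℝ X]
  (hsmul : ∀ (c : ℝ) (x : X), 0 ≤ c → 0 ≤ x → 0 ≤ c • x)

include hsmul

lemma smul_mono_vl {c : ℝ} {x y : X} (hc : 0 ≤ c) (h : x ≤ y) : c • x ≤ c • y := by
  have := hsmul c (y - x) hc (sub_nonneg.2 h)
  rw [smul_sub, sub_nonneg] at this; exact this

lemma smul_mono_vl' {c d : ℝ} {x : X} (hx : 0 ≤ x) (h : c ≤ d) : c • x ≤ d • x := by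
  have := hsmul (d - c) x (by linarith) hx
  rw [sub_smul, sub_nonneg] at this; exact this

lemma smul_inf_vl {c : ℝ} (hc : 0 < c) (x y : X) : c • (x ⊓ y) = (c • x) ⊓ (c • y) := by
  refine le_antisymm (le_inf (smul_mono_vl hsmul hc.le inf_le_left)
    (smul_mono_vl hsmul hc.le inf_le_right)) ?_
  have h1 : c⁻¹ • ((c • x) ⊓ (c • y)) ≤ x ⊓ y := by
    refine le_inf ?_ ?_
    · have := smul_mono_vl hsmul (le_of_lt (inv_pos.2 hc)) (inf_le_left (a := c • x) (b := c • y))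
      rwa [inv_smul_smul₀ hc.ne'] at this
    · have := smul_mono_vl hsmul (le_of_lt (inv_pos.2 hc)) (inf_le_right (a := c • x) (b := c • y))
      rwa [inv_smul_smul₀ hc.ne'] at this
  have := smul_mono_vl hsmul hc.le h1
  rwa [smul_inv_smul₀ hc.ne'] at this

/-- scaling preserves disjointness -/
lemma smul_disj_vl {b b' : X} (hb : 0 ≤ b) (hb' : 0 ≤ b') (hd : b ⊓ b' = 0)
    {c : ℝ} (hc : 0 ≤ c) : (c • b) ⊓ b' = 0 := by
  set M := max c 1 with hM
  have hM1 : (1:ℝ) ≤ M := le_max_right _ _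
  have hM0 : (0:ℝ) < M := lt_of_lt_of_le one_pos hM1
  have h1 : c • b ≤ M • b := smul_mono_vl' hsmul hb (le_max_left _ _)
  have h2 : b' ≤ M • b' := by
    have := smul_mono_vl' hsmul hb' hM1
    rwa [one_smul] at this
  have h3 : (c • b) ⊓ b' ≤ (M • b) ⊓ (M • b') := inf_le_inf h1 h2
  rw [← smul_inf_vl hsmul hM0, hd, smul_zero] at h3
  have h4 : (0:X) ≤ (c • b) ⊓ b' := le_inf (hsmul c b hc hb) hb'
  exact le_antisymm h3 h4

omit hsmul in
lemma inf_add_le_vl {u v w : X} (hu : 0 ≤ u) (hv : 0 ≤ v) (hw : 0 ≤ w) :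
    (u + v) ⊓ w ≤ u ⊓ w + v ⊓ w := by
  have h1 : (u + v) ⊓ w ≤ u ⊓ w + v := by
    rw [← sub_le_iff_le_add]
    refine le_inf ?_ ?_
    · calc (u+v) ⊓ w - v ≤ (u+v) - v := sub_le_sub_right inf_le_left v
        _ = u := by abel
    · calc (u+v) ⊓ w - v ≤ w - v := sub_le_sub_right inf_le_right v
        _ ≤ w := by simpa using sub_le_self w hv
  have h2 : (u + v) ⊓ w ≤ u ⊓ w + w :=
    le_trans inf_le_right (le_add_of_nonneg_left (le_inf hu hw))
  calc (u+v) ⊓ w ≤ (u⊓w + v) ⊓ (u⊓w + w) := le_inf h1 h2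
    _ = u⊓w + v⊓w := (add_inf _ _ _).symm

lemma abs_smul_vl {b : X} (hb : 0 ≤ b) (c : ℝ) : |c • b| = |c| • b := by
  rcases le_or_gt 0 c with hc | hc
  · rw [abs_of_nonneg (hsmul c b hc hb), abs_of_nonneg hc]
  · have h1 : (0:X) ≤ (-c) • b := hsmul (-c) b (by linarith) hb
    have h2 : c • b ≤ 0 := by rw [neg_smul] at h1; exact neg_nonneg.1 h1
    rw [abs_of_nonpos h2, abs_of_neg hc, ← neg_smul]

/-- from m • b ≤ 0 with m > 0 conclude b ≤ 0 -/
lemma neg_of_smul_nonpos {m : ℝ} {b : X} (hm : 0 < m) (h : m • b ≤ 0) : b ≤ 0 := by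
  have := smul_mono_vl hsmul (le_of_lt (inv_pos.2 hm)) h
  rwa [smul_zero, inv_smul_smul₀ hm.ne'] at this

/-- key computation: for 0 ≤ b:  min c 1 • b ≤ (c • b) ⊓ b -/
lemma min_smul_le_inf {b : X} (hb : 0 ≤ b) {c : ℝ} :
    (min c 1) • b ≤ (c • b) ⊓ b := by
  refine le_inf (smul_mono_vl' hsmul hb (min_le_left _ _)) ?_
  have := smul_mono_vl' hsmul hb (min_le_right c 1)
  rwa [one_smul] at this

omit hsmul in
lemma sum_nonneg_vl {ι : Type*} {s : Finset ι} {f : ι → X}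
    (h : ∀ i ∈ s, 0 ≤ f i) : 0 ≤ ∑ i ∈ s, f i := by
  induction s using Finset.cons_induction with
  | empty => simp
  | cons a s ha ih =>
    rw [Finset.sum_cons]
    exact add_nonneg (h a (Finset.mem_cons_self _ _))
      (ih fun i hi => h i (Finset.mem_cons.2 (Or.inr hi)))

omit hsmul in
lemma sum_le_sum_vl {ι : Type*} {s : Finset ι} {f g : ι → X}
    (h : ∀ i ∈ s, f i ≤ g i) : ∑ i ∈ s, f i ≤ ∑ i ∈ s, g i := by
  induction s using Finset.cons_induction with
  | empty => simp
  | cons a s ha ih =>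
    rw [Finset.sum_cons, Finset.sum_cons]
    exact add_le_add (h a (Finset.mem_cons_self _ _))
      (ih fun i hi => h i (Finset.mem_cons.2 (Or.inr hi)))

omit hsmul in
lemma sum_inf_zero {ι : Type*} {s : Finset ι} {f : ι → X} {w : X} (hw : 0 ≤ w)
    (h : ∀ i ∈ s, 0 ≤ f i ∧ f i ⊓ w = 0) : (∑ i ∈ s, f i) ⊓ w = 0 := by
  induction s using Finset.cons_induction with
  | empty => simpa using inf_eq_left.2 hw
  | cons a s ha ih =>
    rw [Finset.sum_cons]
    have hs0 : 0 ≤ ∑ i ∈ s, f i :=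
      sum_nonneg_vl fun i hi => (h i (Finset.mem_cons.2 (Or.inr hi))).1
    have ha0 := h a (Finset.mem_cons_self _ _)
    refine le_antisymm ?_ (le_inf (add_nonneg ha0.1 hs0) hw)
    calc (f a + ∑ i ∈ s, f i) ⊓ w
        ≤ f a ⊓ w + (∑ i ∈ s, f i) ⊓ w := inf_add_le_vl ha0.1 hs0 hw
      _ = 0 := by
          rw [ha0.2, ih fun i hi => h i (Finset.mem_cons.2 (Or.inr hi)), add_zero]

omit hsmul in
lemma abs_sub_abs_le_vl (u v : X) : |u| - |v| ≤ |u - v| := by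
  have h := abs_add_le (u - v) v
  rw [sub_add_cancel] at h
  exact sub_le_iff_le_add.2 h

lemma coeff_one {b : X} (hb : 0 < b) {t : ℝ} (h : |b - t • b| ⊓ b = 0) : t = 1 := by
  by_contra hne
  have h1 : b - t • b = (1 - t) • b := by rw [sub_smul, one_smul]
  have h3 : min |1 - t| 1 • b ≤ 0 := by
    calc min |1 - t| 1 • b ≤ (|1 - t| • b) ⊓ b := min_smul_le_inf hsmul hb.le
      _ = 0 := by rw [← abs_smul_vl hsmul hb.le, ← h1, h]
  have hm : 0 < min |1 - t| 1 :=
    lt_min (abs_pos.2 (sub_ne_zero.2 fun hh => hne hh.symm)) one_pos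
  exact absurd (neg_of_smul_nonpos hsmul hm h3) (hb.not_ge)

lemma coeff_zero {a b : X} (ha : 0 ≤ a) (hb : 0 < b) (hd : a ⊓ b = 0)
    {t : ℝ} (h : |a - t • b| ⊓ b = 0) : t = 0 := by
  by_contra hne
  set m := min |t| 1 with hmdef
  have hm : 0 < m := lt_min (abs_pos.2 hne) one_pos
  have hmb : m • b ≤ |t| • b := smul_mono_vl' hsmul hb.le (min_le_left _ _)
  have h1 : |t| • b ≤ |a - t • b| + a := by
    have h0 := abs_sub_abs_le_vl (t • b) a
    rw [abs_smul_vl hsmul hb.le, abs_of_nonneg ha, abs_sub_comm] at h0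
    exact sub_le_iff_le_add.1 h0
  have h2 : m • b ≤ (|a - t • b| + a) ⊓ (m • b) := le_inf (le_trans hmb h1) le_rfl
  have h3 : (|a - t • b| + a) ⊓ (m • b) ≤ |a - t • b| ⊓ (m • b) + a ⊓ (m • b) :=
    inf_add_le_vl (abs_nonneg _) ha (hsmul m b hm.le hb.le)
  have h4 : a ⊓ (m • b) = 0 := by
    rw [inf_comm]
    exact smul_disj_vl hsmul hb.le ha (by rw [inf_comm]; exact hd) hm.le
  have h5 : |a - t • b| ⊓ (m • b) ≤ |a - t • b| ⊓ b := by
    refine inf_le_inf_left _ ?_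
    have := smul_mono_vl' hsmul hb.le (min_le_right |t| 1)
    rwa [one_smul] at this
  have h6 : m • b ≤ 0 := by
    calc m • b ≤ (|a - t • b| + a) ⊓ (m • b) := h2
      _ ≤ |a - t • b| ⊓ (m • b) + a ⊓ (m • b) := h3
      _ ≤ |a - t • b| ⊓ b + 0 := add_le_add h5 (le_of_eq h4)
      _ = 0 := by rw [h, add_zero]
  exact absurd (neg_of_smul_nonpos hsmul hm h6) (hb.not_ge)

lemma coeff_nonneg_of_pos {b x : X} (hb : 0 < b) (hx : 0 ≤ x) {t : ℝ}
    (h : |x - t • b| ⊓ b = 0) : 0 ≤ t := by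
  by_contra hneg
  push_neg at hneg
  have h1 : (-t) • b ≤ x - t • b := by
    rw [neg_smul, ← zero_sub]
    exact sub_le_sub_right hx _
  have h2 : (-t) • b ≤ |x - t • b| := le_trans h1 (le_abs_self _)
  have h3 : min (-t) 1 • b ≤ 0 := by
    calc min (-t) 1 • b ≤ ((-t) • b) ⊓ b := min_smul_le_inf hsmul hb.le
      _ ≤ |x - t • b| ⊓ b := inf_le_inf_right b h2
      _ = 0 := h
  exact absurd (neg_of_smul_nonpos hsmul (lt_min (by linarith) one_pos) h3) (hb.not_ge)

lemma coef_nonneg [DecidableEq X] (A : Finset X) (hpos : ∀ a ∈ A, 0 < a)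
    (hd : ∀ a ∈ A, ∀ b ∈ A, a ≠ b → a ⊓ b = 0) (c : X → ℝ)
    (h : 0 ≤ ∑ a ∈ A, c a • a) : ∀ a ∈ A, 0 ≤ c a := by
  intro a₀ ha₀
  by_contra hc
  push_neg at hc
  set y := ∑ a ∈ A.erase a₀, c a • a with hy_def
  have hsum : c a₀ • a₀ + y = ∑ a ∈ A, c a • a := Finset.add_sum_erase A (fun a => c a • a) ha₀
  have hy : (-(c a₀)) • a₀ ≤ y := by
    have h0 : 0 ≤ y + c a₀ • a₀ := by rw [add_comm, hsum]; exact h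
    have h1 : 0 - c a₀ • a₀ ≤ y := sub_le_iff_le_add.2 h0
    rwa [neg_smul, ← zero_sub]
  have habs : y ≤ ∑ a ∈ A.erase a₀, |c a| • a := by
    refine sum_le_sum_vl fun a ha => ?_
    exact smul_mono_vl' hsmul (hpos a (Finset.mem_of_mem_erase ha)).le (le_abs_self _)
  have hdisj2 : (∑ a ∈ A.erase a₀, |c a| • a) ⊓ a₀ = 0 := by
    refine sum_inf_zero (hpos a₀ ha₀).le fun a ha => ?_
    have haA := Finset.mem_of_mem_erase ha
    have hane : a ≠ a₀ := Finset.ne_of_mem_erase ha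
    exact ⟨hsmul _ _ (abs_nonneg _) (hpos a haA).le,
      smul_disj_vl hsmul (hpos a haA).le (hpos a₀ ha₀).le (hd a haA a₀ ha₀ hane) (abs_nonneg _)⟩
  have hfin : min (-(c a₀)) 1 • a₀ ≤ 0 := by
    calc min (-(c a₀)) 1 • a₀ ≤ ((-(c a₀)) • a₀) ⊓ a₀ := min_smul_le_inf hsmul (hpos a₀ ha₀).le
      _ ≤ y ⊓ a₀ := inf_le_inf_right a₀ hy
      _ ≤ (∑ a ∈ A.erase a₀, |c a| • a) ⊓ a₀ := inf_le_inf_right a₀ habs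
      _ = 0 := hdisj2
  exact absurd (neg_of_smul_nonpos hsmul (lt_min (by linarith) one_pos) hfin)
    ((hpos a₀ ha₀).not_ge)

end helpers

/-- Let X be an Archimedean vector lattice with maximal family 𝒜 of
pairwise disjoint atoms, and 𝒜₀ = span{a⊗φ_b : a,b ∈ 𝒜}. Then 𝒜₀ is a vector lattice
under the (pointwise) operator order: for T = Σ_{a,b∈F} λ_{ab}(a⊗φ_b) the operator
S = Σ_{a,b∈F} |λ_{ab}|(a⊗φ_b) is the modulus of T, i.e. the least upper bound of
{T, -T} within 𝒜₀. -/
theorem stmt10 {X : Type*}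
    [AddCommGroup X] [Lattice X] [CovariantClass X X (· + ·) (· ≤ ·)] [Module ℝ X]
    (hsmul : ∀ (c : ℝ) (x : X), 0 ≤ c → 0 ≤ x → 0 ≤ c • x)
    (harch : ∀ x y : X, (∀ n : ℕ, n • x ≤ y) → x ≤ 0)
    (𝒜 : Set X) (hatom : ∀ a ∈ 𝒜, VLAtom a)
    (hdisj : ∀ a ∈ 𝒜, ∀ b ∈ 𝒜, a ≠ b → a ⊓ b = 0)
    (hmax : ∀ c : X, VLAtom c → ∃ a ∈ 𝒜, a ⊓ c ≠ 0)
    (φ : X → X →ₗ[ℝ] ℝ)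
    (hφ : ∀ a ∈ 𝒜, ∀ x : X, |x - φ a x • a| ⊓ a = 0)
    (F : Finset X) (hF : ↑F ⊆ 𝒜) (lam : X → X → ℝ)
    (T S : X →ₗ[ℝ] X)
    (hT : T = ∑ a ∈ F, ∑ b ∈ F, lam a b • ((φ b).smulRight a))
    (hS : S = ∑ a ∈ F, ∑ b ∈ F, |lam a b| • ((φ b).smulRight a)) :
    -- S is an upper bound of {T, -T} in the operator order
    (∀ x : X, 0 ≤ x → T x ≤ S x ∧ -(T x) ≤ S x) ∧
    -- S is the least such upper bound among elements of 𝒜₀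
    (∀ (G : Finset X), ↑G ⊆ 𝒜 → ∀ (mu : X → X → ℝ)
      (S' : X →ₗ[ℝ] X), S' = ∑ a ∈ G, ∑ b ∈ G, mu a b • ((φ b).smulRight a) →
      (∀ x : X, 0 ≤ x → T x ≤ S' x ∧ -(T x) ≤ S' x) →
      ∀ x : X, 0 ≤ x → S x ≤ S' x) := by
  classical
  have hdelta : ∀ b ∈ 𝒜, ∀ b' ∈ 𝒜, (φ b) b' = if b = b' then 1 else 0 := by
    intro b hb b' hb'
    by_cases hbe : b = b'
    · subst hbe
      rw [if_pos rfl]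
      exact coeff_one hsmul (hatom b hb).1 (hφ b hb b)
    · rw [if_neg hbe]
      exact coeff_zero hsmul (hatom b' hb').1.le (hatom b hb).1
        (hdisj b' hb' b hb (fun h => hbe h.symm)) (hφ b hb b')
  have hphinn : ∀ b ∈ 𝒜, ∀ x : X, 0 ≤ x → 0 ≤ (φ b) x := fun b hb x hx =>
    coeff_nonneg_of_pos hsmul (hatom b hb).1 hx (hφ b hb x)
  have heval : ∀ (A : Finset X) (k : X → X → ℝ) (x : X),
      (∑ a ∈ A, ∑ b ∈ A, k a b • ((φ b).smulRight a)) x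
        = ∑ a ∈ A, ∑ b ∈ A, (k a b * (φ b) x) • a := by
    intro A k x
    simp [LinearMap.coe_sum, Finset.sum_apply, LinearMap.smul_apply,
      LinearMap.smulRight_apply, smul_smul]
  constructor
  · intro x hx
    constructor
    · rw [← sub_nonneg, hS, hT, heval, heval, ← Finset.sum_sub_distrib]
      refine sum_nonneg_vl fun a ha => ?_
      rw [← Finset.sum_sub_distrib]
      refine sum_nonneg_vl fun b hb => ?_
      rw [← sub_smul, ← sub_mul]
      exact hsmul _ _ (mul_nonneg (by simp [sub_nonneg, le_abs_self])
        (hphinn b (hF hb) x hx)) (hatom a (hF ha)).1.le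
    · rw [← sub_nonneg, sub_neg_eq_add, hS, hT, heval, heval, ← Finset.sum_add_distrib]
      refine sum_nonneg_vl fun a ha => ?_
      rw [← Finset.sum_add_distrib]
      refine sum_nonneg_vl fun b hb => ?_
      rw [← add_smul, ← add_mul]
      exact hsmul _ _ (mul_nonneg (by linarith [neg_abs_le (lam a b)])
        (hphinn b (hF hb) x hx)) (hatom a (hF ha)).1.le
  · intro G hG mu S' hS' hub
    set H := F ∪ G with hH
    have hFH : F ⊆ H := Finset.subset_union_left
    have hGH : G ⊆ H := Finset.subset_union_right
    have hHA : ↑H ⊆ 𝒜 := by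
      intro a ha
      rcases Finset.mem_union.1 ha with h | h
      exacts [hF h, hG h]
    have hpos : ∀ a ∈ H, 0 < a := fun a ha => (hatom a (hHA ha)).1
    have hd : ∀ a ∈ H, ∀ b ∈ H, a ≠ b → a ⊓ b = 0 :=
      fun a ha b hb => hdisj a (hHA ha) b (hHA hb)
    -- evaluation of operator sums at an atom
    have hatomeval : ∀ (A : Finset X), ↑A ⊆ 𝒜 → ∀ (k : X → X → ℝ), ∀ b₀ ∈ 𝒜,
        (∑ a ∈ A, ∑ b ∈ A, k a b • ((φ b).smulRight a)) b₀
          = ∑ a ∈ A, (if b₀ ∈ A then k a b₀ else 0) • a := by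
      intro A hA k b₀ hb₀
      rw [heval]
      refine Finset.sum_congr rfl fun a _ => ?_
      have hterm : ∀ b ∈ A, (k a b * (φ b) b₀) • a
          = if b = b₀ then k a b₀ • a else 0 := by
        intro b hb
        rw [hdelta b (hA hb) b₀ hb₀]
        by_cases hbb : b = b₀ <;> simp [hbb]
      rw [Finset.sum_congr rfl hterm, Finset.sum_ite_eq' A b₀ (fun _ => k a b₀ • a)]
      by_cases hb₀A : b₀ ∈ A <;> simp [hb₀A]
    -- extension of single sums to H
    have hextend : ∀ (A : Finset X), A ⊆ H → ∀ (c : X → ℝ),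
        ∑ a ∈ A, c a • a = ∑ a ∈ H, (if a ∈ A then c a else 0) • a :=
      fun A hAH c =>
        (Finset.sum_congr rfl fun a ha => by rw [if_pos ha]).trans
          (Finset.sum_subset hAH fun a _ ha => by rw [if_neg ha, zero_smul])
    -- the key coefficient inequality
    have hkey : ∀ b₀ ∈ H, ∀ a ∈ H,
        |if a ∈ F ∧ b₀ ∈ F then lam a b₀ else 0|
          ≤ if a ∈ G ∧ b₀ ∈ G then mu a b₀ else 0 := by
      intro b₀ hb₀ a ha
      have hb₀A : b₀ ∈ 𝒜 := hHA hb₀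
      have hTb : T b₀ = ∑ a ∈ H, (if a ∈ F ∧ b₀ ∈ F then lam a b₀ else 0) • a := by
        rw [hT, hatomeval F hF lam b₀ hb₀A, hextend F hFH]
        refine Finset.sum_congr rfl fun a _ => ?_
        by_cases h1 : a ∈ F <;> by_cases h2 : b₀ ∈ F <;> simp [h1, h2]
      have hS'b : S' b₀ = ∑ a ∈ H, (if a ∈ G ∧ b₀ ∈ G then mu a b₀ else 0) • a := by
        rw [hS', hatomeval G hG mu b₀ hb₀A, hextend G hGH]
        refine Finset.sum_congr rfl fun a _ => ?_
        by_cases h1 : a ∈ G <;> by_cases h2 : b₀ ∈ G <;> simp [h1, h2]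
      have hb₀pos : (0:X) ≤ b₀ := (hpos b₀ hb₀).le
      have h1 : 0 ≤ ∑ a ∈ H, ((if a ∈ G ∧ b₀ ∈ G then mu a b₀ else 0)
          - (if a ∈ F ∧ b₀ ∈ F then lam a b₀ else 0)) • a := by
        have := (hub b₀ hb₀pos).1
        rw [← sub_nonneg, hTb, hS'b, ← Finset.sum_sub_distrib] at this
        simpa [sub_smul] using this
      have h2 : 0 ≤ ∑ a ∈ H, ((if a ∈ G ∧ b₀ ∈ G then mu a b₀ else 0)
          + (if a ∈ F ∧ b₀ ∈ F then lam a b₀ else 0)) • a := by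
        have := (hub b₀ hb₀pos).2
        rw [← sub_nonneg, sub_neg_eq_add, hTb, hS'b, ← Finset.sum_add_distrib] at this
        simpa [add_smul] using this
      have k1 := coef_nonneg hsmul H hpos hd _ h1 a ha
      have k2 := coef_nonneg hsmul H hpos hd _ h2 a ha
      rw [abs_le]
      constructor <;> linarith
    -- final inequality
    intro x hx
    -- extension of evaluated double sums to H
    have hext2 : ∀ (A : Finset X), A ⊆ H → ∀ (k : X → X → ℝ),
        ∑ a ∈ A, ∑ b ∈ A, (k a b * (φ b) x) • a
          = ∑ a ∈ H, ∑ b ∈ H, ((if a ∈ A ∧ b ∈ A then k a b else 0) * (φ b) x) • a := by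
      intro A hAH k
      have step1 : ∀ a ∈ A, ∑ b ∈ A, (k a b * (φ b) x) • a
          = ∑ b ∈ H, ((if a ∈ A ∧ b ∈ A then k a b else 0) * (φ b) x) • a := by
        intro a ha
        refine (Finset.sum_congr rfl fun b hb => by rw [if_pos ⟨ha, hb⟩]).trans
          (Finset.sum_subset hAH fun b _ hb => ?_)
        rw [if_neg (fun hc => hb hc.2), zero_mul, zero_smul]
      refine (Finset.sum_congr rfl step1).trans
        (Finset.sum_subset hAH fun a _ ha => Finset.sum_eq_zero fun b _ => ?_)
      rw [if_neg (fun hc => ha hc.1), zero_mul, zero_smul]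
    rw [← sub_nonneg, hS', hS, heval, heval, hext2 F hFH, hext2 G hGH,
      ← Finset.sum_sub_distrib]
    refine sum_nonneg_vl fun a ha => ?_
    rw [← Finset.sum_sub_distrib]
    refine sum_nonneg_vl fun b hb => ?_
    rw [← sub_smul, ← sub_mul]
    refine hsmul _ _ (mul_nonneg ?_ (hphinn b (hHA hb) x hx)) (hpos a ha).le
    rw [sub_nonneg]
    have := hkey b hb a ha
    have habs : (if a ∈ F ∧ b ∈ F then |lam a b| else 0)
        = |if a ∈ F ∧ b ∈ F then lam a b else 0| := by
      by_cases h1 : a ∈ F ∧ b ∈ F <;> simp [h1]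
    rw [habs]
    exact this
end

section
/- For a nonempty set Λ and any Archimedean vector lattice Y, every linear operator from c₀₀(Λ) to Y is order continuous (and hence order bounded). -/
/-- Order continuity of a map between vector lattices. -/
def OCont {X Y : Type*} [AddCommGroup X] [Lattice X] [AddCommGroup Y] [Lattice Y]
    (f : X → Y) : Prop :=
  ∀ (ι : Type) (r : ι → ι → Prop), Nonempty ι → (∀ α α' : ι, ∃ γ : ι, r α γ ∧ r α' γ) →
    ∀ (x : ι → X) (x₀ : X), OConv r x x₀ → OConv r (fun α => f (x α)) (f x₀)

section Aux

variable {Y : Type*} [AddCommGroup Y] [Lattice Y] [CovariantClass Y Y (· + ·) (· ≤ ·)]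
  [Module ℝ Y]

lemma aux_smul_mono_s14 (hs : ∀ (c : ℝ) (y : Y), 0 ≤ c → 0 ≤ y → 0 ≤ c • y)
    {c : ℝ} (hc : 0 ≤ c) {v w : Y} (h : v ≤ w) : c • v ≤ c • w := by
  have h1 := hs c (w - v) hc (by simpa using h)
  rw [smul_sub] at h1
  exact sub_nonneg.1 h1

lemma aux_coeff_mono (hs : ∀ (c : ℝ) (y : Y), 0 ≤ c → 0 ≤ y → 0 ≤ c • y)
    {c d : ℝ} (hcd : c ≤ d) {v : Y} (hv : 0 ≤ v) : c • v ≤ d • v := by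
  have h1 := hs (d - c) v (by linarith) hv
  rw [sub_smul] at h1
  exact sub_nonneg.1 h1

lemma aux_smul_le_abs (hs : ∀ (c : ℝ) (y : Y), 0 ≤ c → 0 ≤ y → 0 ≤ c • y)
    (c : ℝ) (v : Y) : c • v ≤ |c| • |v| := by
  rcases le_total 0 c with hc | hc
  · rw [abs_of_nonneg hc]
    exact aux_smul_mono_s14 hs hc (le_abs_self v)
  · rw [abs_of_nonpos hc]
    have h1 : c • v = (-c) • (-v) := by simp
    rw [h1]
    have h2 : -v ≤ |v| := by rw [← abs_neg]; exact le_abs_self _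
    exact aux_smul_mono_s14 hs (by linarith) h2

lemma aux_add_le_add {a b c d : Y} (h1 : a ≤ b) (h2 : c ≤ d) : a + c ≤ b + d := by
  calc a + c ≤ a + d := add_le_add_right h2 a
    _ = d + a := add_comm a d
    _ ≤ d + b := add_le_add_right h1 d
    _ = b + d := add_comm d b

lemma aux_sum_le_sum {ι : Type*} (s : Finset ι) {f g : ι → Y} (h : ∀ i ∈ s, f i ≤ g i) :
    ∑ i ∈ s, f i ≤ ∑ i ∈ s, g i := by
  classical
  induction s using Finset.cons_induction with
  | empty => simp
  | cons a s ha ih =>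
    rw [Finset.sum_cons, Finset.sum_cons]
    exact aux_add_le_add (h a (Finset.mem_cons_self a s))
      (ih fun i hi => h i (Finset.mem_cons_of_mem hi))

lemma aux_abs_add (a b : Y) : |a + b| ≤ |a| + |b| := by
  refine abs_le'.2 ⟨add_le_add (le_abs_self a) (le_abs_self b), ?_⟩
  rw [neg_add]
  exact add_le_add (neg_le_abs a) (neg_le_abs b)

lemma aux_abs_smul_le (hs : ∀ (c : ℝ) (y : Y), 0 ≤ c → 0 ≤ y → 0 ≤ c • y)
    (c : ℝ) (v : Y) : |c • v| ≤ |c| • |v| := by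
  refine abs_le'.2 ⟨aux_smul_le_abs hs c v, ?_⟩
  rw [← smul_neg]
  have := aux_smul_le_abs hs c (-v)
  rwa [abs_neg] at this

lemma aux_abs_sum_le {ι : Type*} (s : Finset ι) (f : ι → Y) :
    |∑ i ∈ s, f i| ≤ ∑ i ∈ s, |f i| := by
  classical
  induction s using Finset.cons_induction with
  | empty => simp
  | cons a s ha ih =>
    rw [Finset.sum_cons, Finset.sum_cons]
    exact le_trans (aux_abs_add _ _) (aux_add_le_add le_rfl ih)

lemma aux_key {Λ : Type} (hs : ∀ (c : ℝ) (y : Y), 0 ≤ c → 0 ≤ y → 0 ≤ c • y)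
    (T : (Λ →₀ ℝ) →ₗ[ℝ] Y) (F : Finset Λ) (z : Λ →₀ ℝ) (hz : z.support ⊆ F) :
    |T z| ≤ ∑ l ∈ F, |z l| • |T (Finsupp.single l 1)| := by
  classical
  have hz' : z = ∑ l ∈ F, Finsupp.single l (z l) := by
    ext a
    rw [Finsupp.finset_sum_apply]
    simp only [Finsupp.single_apply]
    rw [Finset.sum_ite_eq' F a (fun l => z l)]
    by_cases h : a ∈ F
    · simp [h]
    · simp only [h, if_false]
      exact (Finsupp.notMem_support_iff.1 (fun hc => h (hz hc)))
  have hTz : T z = ∑ l ∈ F, (z l) • T (Finsupp.single l 1) := by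
    conv_lhs => rw [hz']
    rw [map_sum]
    refine Finset.sum_congr rfl (fun l _ => ?_)
    have : Finsupp.single l (z l) = (z l) • Finsupp.single l (1 : ℝ) := by
      rw [Finsupp.smul_single, smul_eq_mul, mul_one]
    rw [this, map_smul]
  rw [hTz]
  calc |∑ l ∈ F, z l • T (Finsupp.single l 1)|
      ≤ ∑ l ∈ F, |z l • T (Finsupp.single l 1)| := aux_abs_sum_le F _
    _ ≤ ∑ l ∈ F, |z l| • |T (Finsupp.single l 1)| :=
        aux_sum_le_sum F fun l _ => aux_abs_smul_le hs (z l) (T (Finsupp.single l 1))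

end Aux

/-- For a nonempty set Λ and any Archimedean vector lattice Y, every
linear operator from c₀₀(Λ) to Y is order continuous (and hence order bounded). -/
theorem stmt14 {Λ : Type} [Nonempty Λ] {Y : Type*}
    [AddCommGroup Y] [Lattice Y] [CovariantClass Y Y (· + ·) (· ≤ ·)] [Module ℝ Y]
    (hsmulY : ∀ (c : ℝ) (y : Y), 0 ≤ c → 0 ≤ y → 0 ≤ c • y)
    (harchY : ∀ x y : Y, (∀ n : ℕ, n • x ≤ y) → x ≤ 0)
    (T : (Λ →₀ ℝ) →ₗ[ℝ] Y) :
    OCont (fun x : Λ →₀ ℝ => T x) ∧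
    (∀ a b : Λ →₀ ℝ, ∃ w : Y, ∀ z : Λ →₀ ℝ, a ≤ z → z ≤ b → |T z| ≤ w) := by
  classical
  constructor
  · -- order continuity
    rintro ι r hι hdirι x x₀ ⟨κ, s, y, ⟨β₀⟩, hdec, hdirκ, hglb, hdom⟩
    have hy0 : ∀ β, (0 : Λ →₀ ℝ) ≤ y β := fun β => hglb.1 ⟨β, rfl⟩
    set F : Finset Λ := (y β₀).support with hF
    set w : Y := ∑ l ∈ F, |T (Finsupp.single l 1)| with hw
    have hw0 : (0 : Y) ≤ w := by
      rw [hw]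
      have h := aux_sum_le_sum (Y := Y) F (f := fun _ => (0 : Y))
        (g := fun l => |T (Finsupp.single l 1)|) fun l _ => abs_nonneg _
      simpa using h
    -- pointwise smallness
    have small : ∀ (l : Λ) (ε : ℝ), 0 < ε → ∃ β, y β l < ε := by
      intro l ε hε
      by_contra h
      push_neg at h
      have hl : Finsupp.single l ε ∈ lowerBounds (Set.range y) := by
        rintro _ ⟨β, rfl⟩
        refine Finsupp.le_def.2 fun a => ?_
        rw [Finsupp.single_apply]
        split_ifs with hla
        · subst hla; exact h β
        · have := Finsupp.le_def.1 (hy0 β) a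
          simpa using this
      have h2 := Finsupp.le_def.1 (hglb.2 hl) l
      simp [Finsupp.single_apply] at h2
      linarith
    -- finite upper bounds in the directed index
    have finub : ∀ B : Finset κ, ∃ γ, ∀ β ∈ B, y γ ≤ y β := by
      intro B
      induction B using Finset.cons_induction with
      | empty => exact ⟨β₀, by simp⟩
      | cons b B hb ih =>
        obtain ⟨γ₀, hγ₀⟩ := ih
        obtain ⟨γ, hγ1, hγ2⟩ := hdirκ b γ₀
        refine ⟨γ, fun β hβ => ?_⟩
        rcases Finset.mem_cons.1 hβ with h | h
        · rw [h]; exact hdec b γ hγ1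
        · exact le_trans (hdec γ₀ γ hγ2) (hγ₀ β h)
    have keyidx : ∀ n : ℕ, ∃ γ, y γ ≤ y β₀ ∧ ∀ l ∈ F, y γ l ≤ ((n : ℝ) + 1)⁻¹ := by
      intro n
      have hpos : (0 : ℝ) < ((n : ℝ) + 1)⁻¹ := by positivity
      choose g hg using fun l : Λ => small l (((n : ℝ) + 1)⁻¹) hpos
      obtain ⟨γ, hγ⟩ := finub (insert β₀ (F.image g))
      refine ⟨γ, hγ β₀ (Finset.mem_insert_self _ _), fun l hl => ?_⟩
      have h1 := Finsupp.le_def.1 (hγ (g l) (Finset.mem_insert_of_mem (Finset.mem_image_of_mem g hl))) l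
      exact le_trans h1 (hg l).le
    refine ⟨ℕ, (· ≤ ·), fun n => ((n : ℝ) + 1)⁻¹ • w, ⟨0⟩, ?_, fun n m => ⟨max n m, le_max_left _ _, le_max_right _ _⟩, ?_, ?_⟩
    · intro n m hnm
      refine aux_coeff_mono hsmulY ?_ hw0
      have h1 : (0 : ℝ) < (n : ℝ) + 1 := by positivity
      have h2 : (n : ℝ) + 1 ≤ (m : ℝ) + 1 := by exact_mod_cast Nat.succ_le_succ hnm
      exact inv_anti₀ h1 h2
    · constructor
      · rintro _ ⟨n, rfl⟩
        exact hsmulY _ _ (by positivity) hw0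
      · intro v hv
        refine harchY v w fun n => ?_
        rw [← Nat.cast_smul_eq_nsmul ℝ]
        cases n with
        | zero => simpa using hw0
        | succ n =>
          have h1 : v ≤ ((n : ℝ) + 1)⁻¹ • w := hv ⟨n, rfl⟩
          have h2 := aux_smul_mono_s14 hsmulY (show (0:ℝ) ≤ (n : ℝ) + 1 by positivity) h1
          rw [smul_smul, mul_inv_cancel₀ (by positivity : ((n:ℝ)+1) ≠ 0), one_smul] at h2
          have h3 : ((n + 1 : ℕ) : ℝ) = (n : ℝ) + 1 := by push_cast; ring
          rw [h3]
          exact h2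
    · intro n
      obtain ⟨γ, hγ1, hγ2⟩ := keyidx n
      obtain ⟨α₀, hα₀⟩ := hdom γ
      refine ⟨α₀, fun α hα => ?_⟩
      have hle := hα₀ α hα
      have hpt : ∀ l, |(x α - x₀) l| ≤ y γ l := fun l => Finsupp.le_def.1 hle l
      have hsupp : (x α - x₀).support ⊆ F := by
        intro l hl
        by_contra hlF
        have h0 : y β₀ l = 0 := Finsupp.notMem_support_iff.1 hlF
        have h1 : y γ l ≤ 0 := h0 ▸ Finsupp.le_def.1 hγ1 l
        have h3 : (x α - x₀) l = 0 :=
          abs_eq_zero.1 (le_antisymm (le_trans (hpt l) h1) (abs_nonneg _))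
        exact Finsupp.mem_support_iff.1 hl h3
      have hb : ∀ l ∈ F, |(x α - x₀) l| ≤ ((n : ℝ) + 1)⁻¹ :=
        fun l hl => le_trans (hpt l) (hγ2 l hl)
      show |T (x α) - T x₀| ≤ ((n : ℝ) + 1)⁻¹ • w
      rw [← map_sub, hw, Finset.smul_sum]
      refine le_trans (aux_key hsmulY T F (x α - x₀) hsupp) ?_
      exact aux_sum_le_sum F fun l hl => aux_coeff_mono hsmulY (hb l hl) (abs_nonneg _)
  · -- order boundedness
    intro a b
    set F : Finset Λ := a.support ∪ b.support with hF
    refine ⟨∑ l ∈ F, (|a l| ⊔ |b l|) • |T (Finsupp.single l 1)|, fun z ha hb => ?_⟩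
    have hsupp : z.support ⊆ F := by
      intro l hl
      by_contra hlF
      rw [hF, Finset.mem_union] at hlF
      push_neg at hlF
      have ha0 : a l = 0 := Finsupp.notMem_support_iff.1 hlF.1
      have hb0 : b l = 0 := Finsupp.notMem_support_iff.1 hlF.2
      have h1 := Finsupp.le_def.1 ha l
      have h2 := Finsupp.le_def.1 hb l
      exact Finsupp.mem_support_iff.1 hl (le_antisymm (hb0 ▸ h2) (ha0 ▸ h1))
    refine le_trans (aux_key hsmulY T F z hsupp) (aux_sum_le_sum F fun l _ => ?_)
    refine aux_coeff_mono hsmulY ?_ (abs_nonneg _)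
    refine abs_le.2 ⟨?_, ?_⟩
    · have h1 := Finsupp.le_def.1 ha l
      have h2 : -(|a l| ⊔ |b l|) ≤ -|a l| := neg_le_neg le_sup_left
      have h3 : -|a l| ≤ a l := neg_abs_le _
      linarith
    · have h1 := Finsupp.le_def.1 hb l
      have h2 : b l ≤ |b l| := le_abs_self _
      have h3 : |b l| ≤ |a l| ⊔ |b l| := le_sup_right
      linarith
end

section
/- If X is an Archimedean vector lattice such that every linear functional on X is order bounded, then every principal ideal I_x (x ≥ 0) of X is finite-dimensional. -/
/-- If X is an Archimedean vector lattice such that every linear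
functional on X is order bounded, then every principal ideal
I_x = {y : |y| ≤ c • x for some c ≥ 0} (x ≥ 0) of X is finite-dimensional. -/
theorem stmt15 {X : Type*} [AddCommGroup X] [Lattice X]
    [CovariantClass X X (· + ·) (· ≤ ·)] [Module ℝ X]
    (hsmul : ∀ (c : ℝ) (x : X), 0 ≤ c → 0 ≤ x → 0 ≤ c • x)
    (harch : ∀ x y : X, (∀ n : ℕ, n • x ≤ y) → x ≤ 0)
    (hob : ∀ φ : X →ₗ[ℝ] ℝ, ∀ a b : X, ∃ M : ℝ, ∀ z : X, a ≤ z → z ≤ b → |φ z| ≤ M)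
    (x : X) (hx : 0 ≤ x) :
    ∃ V : Submodule ℝ X,
      (↑V = {y : X | ∃ c : ℝ, 0 ≤ c ∧ |y| ≤ c • x}) ∧ FiniteDimensional ℝ V := by
  classical
  -- smul by a nonneg scalar is monotone
  have hmono : ∀ (a : ℝ) (y z : X), 0 ≤ a → y ≤ z → a • y ≤ a • z := by
    intro a y z ha hyz
    have h := hsmul a (z - y) ha (sub_nonneg.2 hyz)
    rw [smul_sub] at h
    exact sub_nonneg.1 h
  -- |a • y| ≤ a • |y| for a ≥ 0
  have habs : ∀ (a : ℝ) (y : X), 0 ≤ a → |a • y| ≤ a • |y| := by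
    intro a y ha
    refine abs_le'.2 ⟨hmono a y |y| ha (le_abs_self y), ?_⟩
    rw [← smul_neg]
    exact hmono a (-y) |y| ha (neg_le_abs y)
  -- the principal ideal, as a submodule
  set S : Set X := {y : X | ∃ c : ℝ, 0 ≤ c ∧ |y| ≤ c • x} with hS
  have hzero : (0 : X) ∈ S := ⟨0, le_refl 0, by simp⟩
  have hadd : ∀ y z : X, y ∈ S → z ∈ S → y + z ∈ S := by
    rintro y z ⟨c, hc, hyc⟩ ⟨d, hd, hzd⟩
    refine ⟨c + d, by linarith, ?_⟩
    calc |y + z| ≤ |y| + |z| := abs_add_le y z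
      _ ≤ c • x + d • x := add_le_add hyc hzd
      _ = (c + d) • x := (add_smul c d x).symm
  have hsm : ∀ (a : ℝ) (y : X), y ∈ S → a • y ∈ S := by
    rintro a y ⟨c, hc, hyc⟩
    refine ⟨|a| * c, mul_nonneg (abs_nonneg a) hc, ?_⟩
    have h1 : |a • y| ≤ |a| • |y| := by
      rcases le_total 0 a with ha | ha
      · rw [abs_of_nonneg ha]; exact habs a y ha
      · have : a • y = -((-a) • y) := by simp
        rw [this, abs_neg, abs_of_nonpos ha]
        exact habs (-a) y (by linarith)
    calc |a • y| ≤ |a| • |y| := h1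
      _ ≤ |a| • (c • x) := hmono |a| |y| (c • x) (abs_nonneg a) hyc
      _ = (|a| * c) • x := smul_smul |a| c x
  refine ⟨⟨⟨⟨S, fun {y z} => hadd y z⟩, hzero⟩, fun {a y} => hsm a y⟩, rfl, ?_⟩
  set V : Submodule ℝ X := ⟨⟨⟨S, fun {y z} => hadd y z⟩, hzero⟩, fun {a y} => hsm a y⟩
    with hV
  by_contra hfin
  -- a basis of V must have infinite index set
  have hinf : (Module.Basis.ofVectorSpaceIndex ℝ V).Infinite := by
    by_contra hfin'
    rw [Set.not_infinite] at hfin'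
    haveI := hfin'.fintype
    exact hfin (Module.Finite.of_basis (Module.Basis.ofVectorSpace ℝ V))
  set b := Module.Basis.ofVectorSpace ℝ V with hb
  set g : ℕ ↪ (Module.Basis.ofVectorSpaceIndex ℝ V) := hinf.natEmbedding with hg
  -- for each basis vector choose a positive bound constant
  have hmem : ∀ i : (Module.Basis.ofVectorSpaceIndex ℝ V), ((b i : V) : X) ∈ S := fun i =>
    (b i : V).2
  choose c0 hc0 hbc0 using hmem
  set c : (Module.Basis.ofVectorSpaceIndex ℝ V) → ℝ := fun i => c0 i + 1 with hcd
  have hcpos : ∀ i, 0 < c i := fun i => by have := hc0 i; simp only [hcd]; linarith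
  have hbc : ∀ i, |((b i : V) : X)| ≤ c i • x := by
    intro i
    refine (hbc0 i).trans ?_
    have hcx : c i • x = c0 i • x + x := by
      simp only [hcd]; rw [add_smul, one_smul]
    rw [hcx]
    exact le_add_of_nonneg_right hx
  -- the unbounded functional
  set f : (Module.Basis.ofVectorSpaceIndex ℝ V) → ℝ :=
    fun i => c i * Function.extend g (fun n => (n : ℝ)) 0 i with hf
  set φV : V →ₗ[ℝ] ℝ := b.constr ℝ f with hφV
  obtain ⟨W, hW⟩ := Submodule.exists_isCompl V
  set π : X →ₗ[ℝ] V := V.linearProjOfIsCompl W hW with hπ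
  set φ : X →ₗ[ℝ] ℝ := φV.comp π with hφ
  obtain ⟨M, hM⟩ := hob φ (-x) x
  obtain ⟨n, hn⟩ := exists_nat_gt M
  set i := g n with hi
  set z : X := (c i)⁻¹ • ((b i : V) : X) with hz
  have hcinv : (0:ℝ) ≤ (c i)⁻¹ := le_of_lt (inv_pos.2 (hcpos i))
  have hzabs : |z| ≤ x := by
    calc |z| ≤ (c i)⁻¹ • |((b i : V) : X)| := habs _ _ hcinv
      _ ≤ (c i)⁻¹ • (c i • x) := hmono _ _ _ hcinv (hbc i)
      _ = ((c i)⁻¹ * c i) • x := smul_smul _ _ _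
      _ = x := by rw [inv_mul_cancel₀ (ne_of_gt (hcpos i)), one_smul]
  have h1 : z ≤ x := le_trans (le_abs_self z) hzabs
  have h2 : -x ≤ z := neg_le.1 (le_trans (neg_le_abs z) hzabs)
  have hφz : φ z = n := by
    have hπz : π ((b i : V) : X) = (b i : V) :=
      Submodule.linearProjOfIsCompl_apply_left hW (b i : V)
    have : φ z = (c i)⁻¹ * φV (b i : V) := by
      simp only [hφ, hz, LinearMap.comp_apply, map_smul, hπz, smul_eq_mul]
    rw [this]
    have hcb : φV (b i : V) = f i := b.constr_basis ℝ f i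
    rw [hcb, hf]
    simp only [hi, g.injective.extend_apply]
    rw [inv_mul_cancel_left₀ (ne_of_gt (hcpos (g n)))]
  have hMz := hM z h2 h1
  rw [hφz, abs_of_nonneg (by positivity : (0:ℝ) ≤ (n:ℝ))] at hMz
  linarith
end

section
/- Let X be a non-Archimedean vector lattice. Then X admits a linear functional that is not order bounded. Moreover, every order bounded functional on X vanishes on all infinitely small elements. -/
/-- Let X be a non-Archimedean vector lattice. Then X admits a linear
functional that is not order bounded; moreover every order bounded functional on X
vanishes on all infinitely small elements. -/
theorem stmt17 {X : Type*} [AddCommGroup X] [Lattice X]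
    [CovariantClass X X (· + ·) (· ≤ ·)] [Module ℝ X]
    (hsmul : ∀ (c : ℝ) (x : X), 0 ≤ c → 0 ≤ x → 0 ≤ c • x)
    -- X is non-Archimedean: there is an infinitely small element 0 < x
    (hna : ∃ x y : X, 0 < x ∧ ∀ n : ℕ, n • x ≤ y) :
    (∃ φ : X →ₗ[ℝ] ℝ,
      ¬ (∀ a b : X, ∃ M : ℝ, ∀ z : X, a ≤ z → z ≤ b → |φ z| ≤ M)) ∧
    (∀ φ : X →ₗ[ℝ] ℝ,
      (∀ a b : X, ∃ M : ℝ, ∀ z : X, a ≤ z → z ≤ b → |φ z| ≤ M) →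
      ∀ z : X, 0 ≤ z → (∃ w : X, ∀ n : ℕ, n • z ≤ w) → φ z = 0) := by
  obtain ⟨x, y, hx, hxy⟩ := hna
  have hnsmul : ∀ (z : X), 0 ≤ z → ∀ n : ℕ, 0 ≤ n • z := by
    intro z hz n
    have : ((n : ℝ)) • z = n • z := by
      simp [Nat.cast_smul_eq_nsmul]
    rw [← this]
    exact hsmul _ _ (by positivity) hz
  constructor
  · -- find φ with φ x ≠ 0
    have hx0 : x ≠ 0 := ne_of_gt hx
    have : ¬ ∀ φ : Module.Dual ℝ X, φ x = 0 := by
      rw [Module.forall_dual_apply_eq_zero_iff ℝ x]; exact hx0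
    push_neg at this
    obtain ⟨φ, hφ⟩ := this
    refine ⟨φ, fun h => ?_⟩
    obtain ⟨M, hM⟩ := h 0 y
    obtain ⟨n, hn⟩ := exists_nat_gt (M / |φ x|)
    have habs : |φ x| > 0 := abs_pos.mpr hφ
    have h1 : |φ (n • x)| ≤ M := hM _ (hnsmul x hx.le n) (hxy n)
    rw [map_nsmul, nsmul_eq_mul, abs_mul, Nat.abs_cast] at h1
    have : M / |φ x| < n := hn
    nlinarith [(div_lt_iff₀ habs).mp hn]
  · intro φ hb z hz ⟨w, hw⟩
    obtain ⟨M, hM⟩ := hb 0 w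
    by_contra hne
    have habs : |φ z| > 0 := abs_pos.mpr hne
    obtain ⟨n, hn⟩ := exists_nat_gt (M / |φ z|)
    have h1 : |φ (n • z)| ≤ M := hM _ (hnsmul z hz n) (hw n)
    rw [map_nsmul, nsmul_eq_mul, abs_mul, Nat.abs_cast] at h1
    nlinarith [(div_lt_iff₀ habs).mp hn]
end

section
/- For every n ∈ ℕ with n ≥ 1 (and also for n = ∞), the order dual of ℝⁿ with the lexicographic order is lattice isomorphic to ℝ, via the map φ ↦ φ(e₁). -/
/-- The lexicographic order on ι → ℝ for a linearly ordered index set ι: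
x ≤ y iff x = y or the first coordinate where they differ is larger in y. -/
def lexLeFun {ι : Type*} [LinearOrder ι] (x y : ι → ℝ) : Prop :=
  x = y ∨ ∃ i : ι, (∀ j : ι, j < i → x j = y j) ∧ x i < y i


section Aux

variable {ι : Type*} [LinearOrder ι] {i₀ : ι}

lemma lexLe_apply_bot (hbot : ∀ j, i₀ ≤ j) {a z : ι → ℝ} (h : lexLeFun a z) :
    a i₀ ≤ z i₀ := by
  rcases h with rfl | ⟨i, hj, hi⟩
  · exact le_refl _
  · rcases eq_or_lt_of_le (hbot i) with rfl | hlt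
    · exact hi.le
    · exact (hj i₀ hlt).le

lemma phi_eq (hbot : ∀ j, i₀ ≤ j) {φ : (ι → ℝ) →ₗ[ℝ] ℝ} {e : ι → ℝ}
    (he : e i₀ = 1)
    (hb : ∀ a b : ι → ℝ, ∃ M : ℝ, ∀ z, lexLeFun a z → lexLeFun z b → |φ z| ≤ M)
    (x : ι → ℝ) : φ x = φ e * x i₀ := by
  obtain ⟨M, hM⟩ := hb (-e) e
  have key : ∀ y : ι → ℝ, y i₀ = 0 → φ y = 0 := by
    intro y hy
    by_contra hne
    have hpos : 0 < |φ y| := abs_pos.2 hne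
    have habs : ∀ t : ℝ, |t| * |φ y| ≤ M := by
      intro t
      have h0 : (t • y) i₀ = 0 := by rw [Pi.smul_apply, hy, smul_zero]
      have h1 : lexLeFun (-e) (t • y) := by
        right
        refine ⟨i₀, fun j hj => absurd hj (not_lt.2 (hbot j)), ?_⟩
        rw [Pi.neg_apply, he, h0]; norm_num
      have h2 : lexLeFun (t • y) e := by
        right
        refine ⟨i₀, fun j hj => absurd hj (not_lt.2 (hbot j)), ?_⟩
        rw [he, h0]; norm_num
      have := hM (t • y) h1 h2
      rwa [map_smul, smul_eq_mul, abs_mul] at this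
    have hM0 : 0 ≤ M := le_trans (by positivity) (habs 0)
    have ht := habs ((M + 1) / |φ y|)
    rw [abs_of_nonneg (by positivity), div_mul_cancel₀ _ hpos.ne'] at ht
    linarith
  have hy : (x - x i₀ • e) i₀ = 0 := by
    rw [Pi.sub_apply, Pi.smul_apply, he, smul_eq_mul, mul_one, sub_self]
  calc φ x = φ (x i₀ • e + (x - x i₀ • e)) := by congr 1; abel
    _ = φ e * x i₀ := by
        rw [map_add, map_smul, key _ hy, smul_eq_mul, add_zero, mul_comm]

lemma proj_bdd (hbot : ∀ j, i₀ ≤ j) (c : ℝ) (a b : ι → ℝ) :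
    ∃ M : ℝ, ∀ z : ι → ℝ, lexLeFun a z → lexLeFun z b →
      |(c • LinearMap.proj i₀ : (ι → ℝ) →ₗ[ℝ] ℝ) z| ≤ M := by
  refine ⟨|c| * (|a i₀| + |b i₀|), fun z h1 h2 => ?_⟩
  have ha := lexLe_apply_bot hbot h1
  have hb := lexLe_apply_bot hbot h2
  have hz : |z i₀| ≤ |a i₀| + |b i₀| :=
    le_trans (abs_le_max_abs_abs ha hb)
      (max_le (le_add_of_nonneg_right (abs_nonneg _))
        (le_add_of_nonneg_left (abs_nonneg _)))
  simp only [LinearMap.smul_apply, LinearMap.proj_apply, smul_eq_mul, abs_mul]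
  exact mul_le_mul_of_nonneg_left hz (abs_nonneg c)

lemma pos_iff (hbot : ∀ j, i₀ ≤ j) {φ : (ι → ℝ) →ₗ[ℝ] ℝ} {e : ι → ℝ}
    (he : e i₀ = 1)
    (hb : ∀ a b : ι → ℝ, ∃ M : ℝ, ∀ z, lexLeFun a z → lexLeFun z b → |φ z| ≤ M) :
    (∀ z : ι → ℝ, lexLeFun 0 z → 0 ≤ φ z) ↔ 0 ≤ φ e := by
  constructor
  · intro h
    refine h _ (Or.inr ⟨i₀, fun j hj => absurd hj (not_lt.2 (hbot j)), ?_⟩)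
    rw [Pi.zero_apply, he]; norm_num
  · intro h z hz
    have hz0 : (0 : ℝ) ≤ z i₀ := by
      have := lexLe_apply_bot hbot hz
      simpa using this
    rw [phi_eq hbot he hb]
    exact mul_nonneg h hz0

end Aux

/-- For every n ≥ 1 (and also for n = ∞), the order dual of ℝⁿ with the
lexicographic order is lattice isomorphic to ℝ via φ ↦ φ(e₁): every order bounded
functional φ equals x ↦ φ(e₁)·x₁, every c ∈ ℝ arises this way from an order bounded
functional, and φ is positive iff φ(e₁) ≥ 0. -/
theorem stmt19 (n : ℕ) (hn : 1 ≤ n) :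
    -- the finite-dimensional case ℝⁿ_Lex
    ((∀ φ : (Fin n → ℝ) →ₗ[ℝ] ℝ,
        (∀ a b : Fin n → ℝ, ∃ M : ℝ, ∀ z : Fin n → ℝ,
          lexLeFun a z → lexLeFun z b → |φ z| ≤ M) →
        ∀ x : Fin n → ℝ,
          φ x = φ (Pi.single (⟨0, hn⟩ : Fin n) 1) * x ⟨0, hn⟩) ∧
      (∀ c : ℝ,
        (∀ a b : Fin n → ℝ, ∃ M : ℝ, ∀ z : Fin n → ℝ,
          lexLeFun a z → lexLeFun z b →
            |(c • LinearMap.proj (⟨0, hn⟩ : Fin n) :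
              (Fin n → ℝ) →ₗ[ℝ] ℝ) z| ≤ M) ∧
        (c • LinearMap.proj (⟨0, hn⟩ : Fin n) :
            (Fin n → ℝ) →ₗ[ℝ] ℝ) (Pi.single (⟨0, hn⟩ : Fin n) 1) = c) ∧
      (∀ φ : (Fin n → ℝ) →ₗ[ℝ] ℝ,
        (∀ a b : Fin n → ℝ, ∃ M : ℝ, ∀ z : Fin n → ℝ,
          lexLeFun a z → lexLeFun z b → |φ z| ≤ M) →
        ((∀ z : Fin n → ℝ, lexLeFun 0 z → 0 ≤ φ z) ↔
          0 ≤ φ (Pi.single (⟨0, hn⟩ : Fin n) 1)))) ∧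
    -- the case n = ∞ : all real sequences with the lexicographic order
    ((∀ φ : (ℕ → ℝ) →ₗ[ℝ] ℝ,
        (∀ a b : ℕ → ℝ, ∃ M : ℝ, ∀ z : ℕ → ℝ,
          lexLeFun a z → lexLeFun z b → |φ z| ≤ M) →
        ∀ x : ℕ → ℝ, φ x = φ (Pi.single 0 1) * x 0) ∧
      (∀ c : ℝ,
        (∀ a b : ℕ → ℝ, ∃ M : ℝ, ∀ z : ℕ → ℝ,
          lexLeFun a z → lexLeFun z b →
            |(c • LinearMap.proj 0 : (ℕ → ℝ) →ₗ[ℝ] ℝ) z| ≤ M) ∧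
        (c • LinearMap.proj 0 : (ℕ → ℝ) →ₗ[ℝ] ℝ) (Pi.single 0 1) = c) ∧
      (∀ φ : (ℕ → ℝ) →ₗ[ℝ] ℝ,
        (∀ a b : ℕ → ℝ, ∃ M : ℝ, ∀ z : ℕ → ℝ,
          lexLeFun a z → lexLeFun z b → |φ z| ≤ M) →
        ((∀ z : ℕ → ℝ, lexLeFun 0 z → 0 ≤ φ z) ↔ 0 ≤ φ (Pi.single 0 1)))) := by
  have hbotF : ∀ j : Fin n, (⟨0, hn⟩ : Fin n) ≤ j := fun j => Fin.mk_le_of_le_val (Nat.zero_le _)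
  have hbotN : ∀ j : ℕ, 0 ≤ j := Nat.zero_le
  have heF : (Pi.single (⟨0, hn⟩ : Fin n) (1:ℝ) : Fin n → ℝ) ⟨0, hn⟩ = 1 := by simp
  have heN : (Pi.single (0:ℕ) (1:ℝ) : ℕ → ℝ) 0 = 1 := by simp
  refine ⟨⟨fun φ hb x => phi_eq hbotF heF hb x,
    fun c => ⟨proj_bdd hbotF c, by simp⟩,
    fun φ hb => pos_iff hbotF heF hb⟩,
    ⟨fun φ hb x => phi_eq hbotN heN hb x,
    fun c => ⟨proj_bdd hbotN c, by simp⟩,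
    fun φ hb => pos_iff hbotN heN hb⟩⟩
end
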